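/- arXiv:1612.03393 — 7 statements merged into one kernel-verified Lean document; each statement's English description precedes it below -/
import Mathlib

section
/- Let M and N be real matrices of the same dimensions m × n. Then there exist matrices N₁ and N₂ of the same dimensions such that: (1) N = N₁ + N₂; (2) rank(N₁) ≤ 2·rank(M); (3) M·N₂ᵀ = 0 and Mᵀ·N₂ = 0; (4) ⟨N₁, N₂⟩ = 0, where ⟨X, Y⟩ = tr(YᵀX) denotes the Frobenius inner product. -/
/-!
Let `P` and `Q` be the orthogonal projections onto the column and row spaces of `M`. Then
`N₂ = (1 - P) N (1 - Q)` is killed by `M` on both sides, and `N₁ = N - N₂ = P N + (1 - P) N Q`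
has rank at most `rank P + rank Q = 2 rank M`. Since `X ↦ (1 - P) X (1 - Q)` is a self-adjoint
idempotent for the Frobenius inner product, `N₂` is orthogonal to `N - N₂`.
-/

open Matrix Filter

/-- The singular values of a real `m × n` matrix: square roots of the eigenvalues of `X * Xᵀ`. -/
noncomputable def sv {m n : ℕ} (X : Matrix (Fin m) (Fin n) ℝ) : Fin m → ℝ :=
  fun i => Real.sqrt ((Matrix.isHermitian_mul_conjTranspose_self X).eigenvalues i)

/-- The singular values arranged in descending order: `svSorted X 0 ≥ svSorted X 1 ≥ ⋯`. -/
noncomputable def svSorted {m n : ℕ} (X : Matrix (Fin m) (Fin n) ℝ) : Fin m → ℝ :=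
  fun i => sv X (Tuple.sort (sv X) i.rev)

/-- `P_a(X) = Σᵢ a σᵢ(X)/(a σᵢ(X) + 1)`. -/
noncomputable def Pa {m n : ℕ} (a : ℝ) (X : Matrix (Fin m) (Fin n) ℝ) : ℝ :=
  ∑ i, a * sv X i / (a * sv X i + 1)

/-- Frobenius norm. -/
noncomputable def frobNorm {m n : ℕ} (X : Matrix (Fin m) (Fin n) ℝ) : ℝ :=
  Real.sqrt (∑ i, ∑ j, (X i j) ^ 2)

/-- Nuclear norm: the sum of the singular values. -/
noncomputable def nuclearNorm {m n : ℕ} (X : Matrix (Fin m) (Fin n) ℝ) : ℝ :=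
  ∑ i, sv X i

/-- The rectangular `m × n` "diagonal" matrix with diagonal entries `σ`. -/
def diagRect {m n : ℕ} (σ : Fin m → ℝ) : Matrix (Fin m) (Fin n) ℝ :=
  Matrix.of fun i j => if (j : ℕ) = (i : ℕ) then σ i else 0

/-- The `r`-restricted isometry constant `δ_r(𝒜)`. -/
noncomputable def ripConst {m n d : ℕ}
    (A : Matrix (Fin m) (Fin n) ℝ →ₗ[ℝ] EuclideanSpace ℝ (Fin d)) (r : ℕ) : ℝ :=
  sInf {δ : ℝ | 0 ≤ δ ∧ ∀ X : Matrix (Fin m) (Fin n) ℝ, X.rank ≤ r →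
    (1 - δ) * frobNorm X ^ 2 ≤ ‖A X‖ ^ 2 ∧ ‖A X‖ ^ 2 ≤ (1 + δ) * frobNorm X ^ 2}

theorem Matrix.rank_add_le {K m n : Type*} [Field K] [Fintype n] (A B : Matrix m n K) :
    (A + B).rank ≤ A.rank + B.rank := by
  rw [rank, rank, rank, mulVecLin_add]
  calc Module.finrank K (LinearMap.range (A.mulVecLin + B.mulVecLin))
      ≤ Module.finrank K ↥(LinearMap.range A.mulVecLin ⊔ LinearMap.range B.mulVecLin) :=
        Submodule.finrank_mono (LinearMap.range_add_le _ _)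
    _ ≤ _ := Submodule.finrank_add_le_finrank_add_finrank _ _

theorem Matrix.rank_sub_sandwich_le {K m n : Type*} [Field K] [Fintype m] [Fintype n]
    [DecidableEq m] [DecidableEq n] (P : Matrix m m K) (Q : Matrix n n K) (N : Matrix m n K) :
    (N - (1 - P) * N * (1 - Q)).rank ≤ P.rank + Q.rank := by
  have h : N - (1 - P) * N * (1 - Q) = P * N + (1 - P) * N * Q := by
    simp only [Matrix.sub_mul, Matrix.mul_sub, Matrix.one_mul, Matrix.mul_one]
    abel
  rw [h]
  exact (rank_add_le _ _).trans
    (add_le_add (rank_mul_le_left _ _) (rank_mul_le_right _ _))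

theorem Matrix.trace_conjTranspose_sandwich_mul_sub {R m n : Type*} [CommRing R] [StarRing R]
    [Fintype m] [Fintype n] {P : Matrix m m R} {Q : Matrix n n R}
    (hP : IsStarProjection P) (hQ : IsStarProjection Q) (N : Matrix m n R) :
    trace ((P * N * Q)ᴴ * (N - P * N * Q)) = 0 := by
  have hPP : P * P = P := hP.isIdempotentElem
  have hQQ : Q * Q = Q := hQ.isIdempotentElem
  have hPs : Pᴴ = P := hP.isSelfAdjoint
  have hQs : Qᴴ = Q := hQ.isSelfAdjoint
  rw [conjTranspose_mul, conjTranspose_mul, hPs, hQs, Matrix.mul_sub, trace_sub, sub_eq_zero]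
  calc trace (Q * (Nᴴ * P) * N)
      = trace ((Q * Q) * (Nᴴ * P * N)) := by rw [hQQ]; simp only [Matrix.mul_assoc]
    _ = trace (Q * (Nᴴ * P * N) * Q) := by rw [Matrix.mul_assoc, trace_mul_comm Q]
    _ = trace (Q * (Nᴴ * P) * (P * N * Q)) := by
        simp only [Matrix.mul_assoc]; rw [← Matrix.mul_assoc P P, hPP]

theorem Matrix.exists_isStarProjection_mul_eq_self_rank_le {𝕜 m n : Type*} [RCLike 𝕜]
    [Fintype m] [Fintype n] [DecidableEq m] (A : Matrix m n 𝕜) :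
    ∃ P : Matrix m m 𝕜, IsStarProjection P ∧ P * A = A ∧ P.rank ≤ A.rank := by
  classical
  set U := LinearMap.range (toEuclideanLin A)
  set P := (toEuclideanCLM (n := m) (𝕜 := 𝕜)).symm U.starProjection
  have hP : toEuclideanLin P = U.starProjection := by
    rw [← coe_toEuclideanCLM_eq_toEuclideanLin, StarAlgEquiv.apply_symm_apply]
  refine ⟨P, isStarProjection_starProjection.map (toEuclideanCLM (n := m) (𝕜 := 𝕜)).symm,
    ?_, ?_⟩
  · apply toEuclideanLin.injective
    rw [toEuclideanLin_eq_toLin_orthonormal] at hP ⊢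
    rw [toLin_mul _ (EuclideanSpace.basisFun m 𝕜).toBasis, hP]
    ext x : 1
    exact U.starProjection_eq_self_iff.mpr (LinearMap.mem_range_self _ x)
  · rw [rank_eq_finrank_range_toLin _ (EuclideanSpace.basisFun m 𝕜).toBasis
        (EuclideanSpace.basisFun m 𝕜).toBasis,
      rank_eq_finrank_range_toLin A (EuclideanSpace.basisFun m 𝕜).toBasis
        (EuclideanSpace.basisFun n 𝕜).toBasis, ← toEuclideanLin_eq_toLin_orthonormal,
      ← toEuclideanLin_eq_toLin_orthonormal, hP]
    exact (congrArg (fun V : Submodule 𝕜 _ => Module.finrank 𝕜 V) U.range_starProjection).le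

open scoped ComplexOrder in
theorem Matrix.exists_decomposition_rank_le_two_mul_rank {𝕜 m n : Type*} [RCLike 𝕜]
    [Fintype m] [Fintype n] [DecidableEq m] [DecidableEq n] (M N : Matrix m n 𝕜) :
    ∃ N₁ N₂ : Matrix m n 𝕜, N = N₁ + N₂ ∧ N₁.rank ≤ 2 * M.rank ∧
      M * N₂ᴴ = 0 ∧ Mᴴ * N₂ = 0 ∧ trace (N₂ᴴ * N₁) = 0 := by
  obtain ⟨P, hP, hPM, hPr⟩ := M.exists_isStarProjection_mul_eq_self_rank_le
  obtain ⟨Q, hQ, hQM, hQr⟩ := Mᴴ.exists_isStarProjection_mul_eq_self_rank_le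
  have hP' : (1 - P)ᴴ = 1 - P := hP.one_sub.isSelfAdjoint
  have hQ' : (1 - Q)ᴴ = 1 - Q := hQ.one_sub.isSelfAdjoint
  have hMP : Mᴴ * (1 - P) = 0 := by
    rw [← hP', ← conjTranspose_mul, Matrix.sub_mul, Matrix.one_mul, hPM, sub_self,
      conjTranspose_zero]
  have hMQ : M * (1 - Q) = 0 := by
    rw [← conjTranspose_conjTranspose M, ← hQ', ← conjTranspose_mul, Matrix.sub_mul,
      Matrix.one_mul, hQM, sub_self, conjTranspose_zero]
  refine ⟨N - (1 - P) * N * (1 - Q), (1 - P) * N * (1 - Q), (sub_add_cancel _ _).symm,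
    ?_, ?_, ?_, trace_conjTranspose_sandwich_mul_sub hP.one_sub hQ.one_sub N⟩
  · rw [two_mul]
    exact (rank_sub_sandwich_le P Q N).trans
      (add_le_add hPr (hQr.trans_eq (rank_conjTranspose M)))
  · rw [conjTranspose_mul, ← Matrix.mul_assoc, hQ', hMQ, Matrix.zero_mul]
  · rw [← Matrix.mul_assoc, ← Matrix.mul_assoc, hMP, Matrix.zero_mul, Matrix.zero_mul]

theorem statement0 (m n : ℕ) (M N : Matrix (Fin m) (Fin n) ℝ) :
    ∃ N₁ N₂ : Matrix (Fin m) (Fin n) ℝ,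
      N = N₁ + N₂ ∧
      N₁.rank ≤ 2 * M.rank ∧
      M * N₂ᵀ = 0 ∧ Mᵀ * N₂ = 0 ∧
      Matrix.trace (N₂ᵀ * N₁) = 0 := by
  simpa only [conjTranspose_eq_transpose_of_trivial] using
    M.exists_decomposition_rank_le_two_mul_rank N
end

section
/- Let M and N be real m × n matrices satisfying M·Nᵀ = 0 and Mᵀ·N = 0. Then the multiset of nonzero singular values of M + N is equal to the union (with multiplicity) of the multiset of nonzero singular values of M and the multiset of nonzero singular values of N. -/
open Matrix Filter

/-!
If `M Nᵀ = 0` and `Mᵀ N = 0`, the Gram matrix of `M + N` is `P + Q` with `P = M Mᵀ`,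
`Q = N Nᵀ` and `P Q = 0`. From `(X - P)(X - Q) = X (X - (P + Q))` one gets
`χ_P · χ_Q = X ^ m · χ_{P+Q}`, so the nonzero roots of `χ_{P+Q}` are those of `χ_P` together
with those of `χ_Q`. Nonzero singular values are the square roots of these nonzero roots.
-/

namespace Matrix

open Polynomial

variable {R ι κ : Type*} [CommRing R]

theorem add_mul_transpose_add_of_mul_transpose_eq_zero [Fintype κ] {M N : Matrix ι κ R}
    (h : M * Nᵀ = 0) : (M + N) * (M + N)ᵀ = M * Mᵀ + N * Nᵀ := by
  have h' : N * Mᵀ = 0 := by rw [← transpose_transpose (N * Mᵀ), transpose_mul,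
    transpose_transpose, h, transpose_zero]
  rw [transpose_add, Matrix.add_mul, Matrix.mul_add, Matrix.mul_add, h, h', add_zero, zero_add]

variable [Fintype ι] [DecidableEq ι]

theorem charpoly_mul_charpoly_of_mul_eq_zero {P Q : Matrix ι ι R} (h : P * Q = 0) :
    P.charpoly * Q.charpoly = X ^ Fintype.card ι * (P + Q).charpoly := by
  have hCPQ : (C : R →+* R[X]).mapMatrix P * (C : R →+* R[X]).mapMatrix Q = 0 := by
    rw [← _root_.map_mul, h, _root_.map_zero]
  have hscalar (B : Matrix ι ι R[X]) : scalar ι (X : R[X]) * B = (X : R[X]) • B := by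
    rw [scalar_apply, ← smul_eq_diagonal_mul]
  have hcharmatrix : charmatrix P * charmatrix Q = (X : R[X]) • charmatrix (P + Q) := by
    simp only [charmatrix, _root_.map_add]
    rw [Matrix.sub_mul, Matrix.mul_sub, Matrix.mul_sub, hCPQ, sub_zero,
      ← (scalar_commute (X : R[X]) (Commute.all _) ((C : R →+* R[X]).mapMatrix P)).eq,
      hscalar, hscalar, hscalar, smul_sub, smul_add]
    abel
  rw [charpoly, charpoly, charpoly, ← det_mul, hcharmatrix, det_smul]

theorem filter_roots_charpoly_add_of_mul_eq_zero [IsDomain R] [DecidableEq R]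
    {P Q : Matrix ι ι R} (h : P * Q = 0) :
    (P + Q).charpoly.roots.filter (· ≠ 0) =
      P.charpoly.roots.filter (· ≠ 0) + Q.charpoly.roots.filter (· ≠ 0) := by
  have hroots : P.charpoly.roots + Q.charpoly.roots =
      (X ^ Fintype.card ι : R[X]).roots + (P + Q).charpoly.roots := by
    rw [← roots_mul (mul_ne_zero (charpoly_monic P).ne_zero (charpoly_monic Q).ne_zero),
      ← roots_mul (mul_ne_zero (pow_ne_zero _ X_ne_zero) (charpoly_monic _).ne_zero),
      charpoly_mul_charpoly_of_mul_eq_zero h]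
  have hX : (X ^ Fintype.card ι : R[X]).roots.filter (· ≠ 0) = 0 := by
    rw [roots_pow, roots_X, Multiset.nsmul_singleton, Multiset.filter_eq_nil]
    intro a ha
    simp [(Multiset.mem_replicate.mp ha).2]
  have := congrArg (Multiset.filter (· ≠ 0)) hroots
  rw [Multiset.filter_add, Multiset.filter_add, hX, zero_add] at this
  exact this.symm

end Matrix

theorem filter_sv_ne_zero {m n : ℕ} (X : Matrix (Fin m) (Fin n) ℝ) :
    (Multiset.map (sv X) Finset.univ.val).filter (· ≠ 0) =
      ((X * Xᵀ).charpoly.roots.filter (· ≠ 0)).map Real.sqrt := by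
  have hX := isHermitian_mul_conjTranspose_self X
  rw [← conjTranspose_eq_transpose_of_trivial, hX.roots_charpoly_eq_eigenvalues,
    RCLike.ofReal_real_eq_id, Function.id_comp, Multiset.filter_map, Multiset.filter_map,
    Multiset.map_map]
  refine congrArg₂ Multiset.map rfl (Multiset.filter_congr fun i _ => ?_)
  exact Real.sqrt_ne_zero (eigenvalues_self_mul_conjTranspose_nonneg X i)

theorem statement1_general (m n : ℕ) (M N : Matrix (Fin m) (Fin n) ℝ)
    (h1 : M * Nᵀ = 0) (h2 : Mᵀ * N = 0) :
    (Multiset.map (sv (M + N)) Finset.univ.val).filter (· ≠ 0) =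
      (Multiset.map (sv M) Finset.univ.val).filter (· ≠ 0) +
        (Multiset.map (sv N) Finset.univ.val).filter (· ≠ 0) := by
  have hPQ : M * Mᵀ * (N * Nᵀ) = 0 := by
    rw [Matrix.mul_assoc, ← Matrix.mul_assoc Mᵀ, h2, Matrix.zero_mul, Matrix.mul_zero]
  rw [filter_sv_ne_zero, filter_sv_ne_zero, filter_sv_ne_zero,
    add_mul_transpose_add_of_mul_transpose_eq_zero h1,
    filter_roots_charpoly_add_of_mul_eq_zero hPQ, Multiset.map_add]

theorem statement1 (m n : ℕ) (hmn : m ≤ n) (M N : Matrix (Fin m) (Fin n) ℝ)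
    (h1 : M * Nᵀ = 0) (h2 : Mᵀ * N = 0) :
    (Multiset.map (sv (M + N)) Finset.univ.val).filter (· ≠ 0) =
      (Multiset.map (sv M) Finset.univ.val).filter (· ≠ 0) +
        (Multiset.map (sv N) Finset.univ.val).filter (· ≠ 0) :=
  statement1_general m n M N h1 h2
end

section
/- Let a > 0 and let M and N be real m × n matrices (m ≤ n) satisfying M·Nᵀ = 0 and Mᵀ·N = 0. Then P_a(M + N) = P_a(M) + P_a(N). -/
open Matrix Filter

/-!
Write `A = M Mᵀ` and `B = N Nᵀ`. The orthogonality conditions give `(M + N)(M + N)ᵀ = A + B` and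
`A B = 0`, hence `(X - A)(X - B) = X (X - (A + B))` and so `X^m χ_{A+B} = χ_A χ_B` for the
characteristic polynomials. Comparing roots, the eigenvalues of `A + B` padded with `m` zeros are
those of `A` together with those of `B`, and `P_a` sums a function vanishing at `0` over them.
-/

open Polynomial

namespace Matrix

variable {n : Type*} [Fintype n] [DecidableEq n]

theorem charmatrix_mul_charmatrix_of_mul_eq_zero {R : Type*} [CommRing R] {A B : Matrix n n R}
    (hAB : A * B = 0) : charmatrix A * charmatrix B = (X : R[X]) • charmatrix (A + B) := by
  have hC : (C : R →+* R[X]).mapMatrix A * (C : R →+* R[X]).mapMatrix B = 0 := by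
    rw [← map_mul, hAB, map_zero]
  simp only [charmatrix, sub_mul, mul_sub, hC, map_add, smul_sub, smul_add, scalar_apply,
    ← smul_eq_diagonal_mul, ← smul_eq_mul_diagonal, sub_zero]
  abel

theorem X_pow_card_mul_charpoly_add_of_mul_eq_zero {R : Type*} [CommRing R] {A B : Matrix n n R}
    (hAB : A * B = 0) : X ^ Fintype.card n * (A + B).charpoly = A.charpoly * B.charpoly := by
  rw [charpoly, charpoly, charpoly, ← det_mul, charmatrix_mul_charmatrix_of_mul_eq_zero hAB,
    det_smul]

variable {𝕜 : Type*} [RCLike 𝕜] {A B : Matrix n n 𝕜}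

theorem IsHermitian.eigenvalues_add_of_mul_eq_zero (hA : A.IsHermitian) (hB : B.IsHermitian)
    (hAB : A * B = 0) :
    Finset.univ.val.map (hA.add hB).eigenvalues + Multiset.replicate (Fintype.card n) 0 =
      Finset.univ.val.map hA.eigenvalues + Finset.univ.val.map hB.eigenvalues := by
  apply Multiset.map_injective (RCLike.ofReal_injective (K := 𝕜))
  have h := congrArg roots (X_pow_card_mul_charpoly_add_of_mul_eq_zero hAB)
  rw [roots_mul ((monic_X_pow _).mul (charpoly_monic _)).ne_zero,
    roots_mul ((charpoly_monic _).mul (charpoly_monic _)).ne_zero, roots_X_pow,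
    (hA.add hB).roots_charpoly_eq_eigenvalues, hA.roots_charpoly_eq_eigenvalues,
    hB.roots_charpoly_eq_eigenvalues] at h
  simpa [Multiset.map_map, Multiset.nsmul_singleton, add_comm] using h

theorem IsHermitian.sum_eigenvalues_add_of_mul_eq_zero {β : Type*} [AddCommMonoid β]
    (hA : A.IsHermitian) (hB : B.IsHermitian) (hAB : A * B = 0) (f : ℝ → β) (hf : f 0 = 0) :
    ∑ i, f ((hA.add hB).eigenvalues i) = ∑ i, f (hA.eigenvalues i) + ∑ i, f (hB.eigenvalues i) := by
  have h := congrArg (fun s => (s.map f).sum) (hA.eigenvalues_add_of_mul_eq_zero hB hAB)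
  simp only [Multiset.map_add, Multiset.sum_add, Multiset.map_replicate, hf,
    Multiset.sum_replicate, smul_zero, add_zero, Multiset.map_map, Function.comp_def] at h
  simpa only [Finset.sum_eq_multiset_sum] using h

end Matrix

theorem statement2_general (m n : ℕ) (a : ℝ)
    (M N : Matrix (Fin m) (Fin n) ℝ) (h1 : M * Nᵀ = 0) (h2 : Mᵀ * N = 0) :
    Pa a (M + N) = Pa a M + Pa a N := by
  have hM := isHermitian_mul_conjTranspose_self M
  have hN := isHermitian_mul_conjTranspose_self N
  have h1' : N * Mᵀ = 0 := by rw [← transpose_transpose N, ← transpose_mul, h1, transpose_zero]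
  have hsq : (M + N) * (M + N)ᴴ = M * Mᴴ + N * Nᴴ := by
    simp only [conjTranspose_eq_transpose_of_trivial]
    rw [transpose_add, Matrix.add_mul, Matrix.mul_add, Matrix.mul_add, h1, h1', add_zero, zero_add]
  have horth : M * Mᴴ * (N * Nᴴ) = 0 := by
    rw [conjTranspose_eq_transpose_of_trivial, Matrix.mul_assoc, ← Matrix.mul_assoc Mᵀ, h2,
      Matrix.zero_mul, Matrix.mul_zero]
  have heig : (isHermitian_mul_conjTranspose_self (M + N)).eigenvalues = (hM.add hN).eigenvalues :=
    IsHermitian.eigenvalues_eq_eigenvalues_iff _ _ |>.mpr (by rw [hsq])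
  simp only [Pa, sv, heig]
  exact hM.sum_eigenvalues_add_of_mul_eq_zero hN horth
    (fun t => a * Real.sqrt t / (a * Real.sqrt t + 1)) (by simp)

theorem statement2 (m n : ℕ) (hmn : m ≤ n) (a : ℝ) (ha : 0 < a)
    (M N : Matrix (Fin m) (Fin n) ℝ) (h1 : M * Nᵀ = 0) (h2 : Mᵀ * N = 0) :
    Pa a (M + N) = Pa a M + Pa a N :=
  statement2_general m n a M N h1 h2
end

section
/- For every a > 0 and all real m × n matrices X and Y (m ≤ n), the function P_a satisfies the triangle inequality: P_a(X + Y) ≤ P_a(X) + P_a(Y). -/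
open Matrix Filter

/-!
Write `f t = a t / (a t + 1)`. Being concave and nondecreasing on `[0, ∞)` with `f 0 = 0`,
`f` agrees on any finite set of nodes with a nonnegative combination of the kinks
`t ↦ min t s`, so it suffices to show that `K_s(X) = ∑ᵢ min (σᵢ(X), s)` is subadditive for
every `s ≥ 0`. Truncating the SVD at level `s` writes `X = M + C` with
`‖M‖_* + s · rank C ≤ K_s(X)`; conversely, Weyl's inequality
`#{i | c < σᵢ(M + C)} ≤ #{i | c < σᵢ(M)} + rank C` gives `K_s(M + C) ≤ ‖M‖_* + s · rank C`.
Subadditivity of `K_s` then follows from that of the nuclear norm and of the rank.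
-/

open Finset

theorem sum_le_sum_of_card_filter_lt_le {ι κ : Type*}
    (a : ι → ℝ) (b : κ → ℝ) (S : Finset ι) (T : Finset κ) (hb : ∀ j ∈ T, 0 ≤ b j)
    (hcard : ∀ c, 0 ≤ c → #{i ∈ S | c < a i} ≤ #{j ∈ T | c < b j}) :
    ∑ i ∈ S, a i ≤ ∑ j ∈ T, b j := by
  classical
  -- remove the largest `a i₀` together with the largest `b j₀`, which is at least `a i₀`
  induction S using Finset.induction_on_max_value a generalizing T with
  | empty => simpa using sum_nonneg hb
  | insert i₀ S hi₀ hmax ih =>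
    by_cases ha : a i₀ ≤ 0
    · exact (sum_nonpos fun i hi => (mem_insert.1 hi).elim (· ▸ ha)
        fun hi => (hmax i hi).trans ha).trans (sum_nonneg hb)
    rw [not_le] at ha
    have hT : T.Nonempty := by
      have := hcard 0 le_rfl
      rw [filter_insert, if_pos ha, card_insert_of_notMem (by simp [hi₀])] at this
      exact (card_pos.1 ((Nat.succ_pos _).trans_le this)).mono (filter_subset _ _)
    obtain ⟨j₀, hj₀, hbmax⟩ := T.exists_max_image b hT
    have hb₀ : a i₀ ≤ b j₀ := by
      by_contra! hlt
      have := hcard (max (b j₀) 0) (le_max_right _ _)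
      rw [filter_insert, if_pos (max_lt hlt ha), card_insert_of_notMem (by simp [hi₀]),
        filter_false_of_mem fun j hj => not_lt.2 ((hbmax j hj).trans (le_max_left _ _))] at this
      simp at this
    have hrest := ih (T.erase j₀) (fun j hj => hb j (mem_of_mem_erase hj)) fun c hc => by
      by_cases hc' : c < a i₀
      · have h := hcard c hc
        rw [filter_insert, if_pos hc', card_insert_of_notMem (by simp [hi₀])] at h
        rw [filter_erase, card_erase_of_mem (mem_filter.2 ⟨hj₀, hc'.trans_le hb₀⟩)]
        omega
      · rw [filter_false_of_mem fun i hi => not_lt.2 ((hmax i hi).trans (not_lt.1 hc'))]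
        exact Nat.zero_le _
    rw [sum_insert hi₀, ← add_sum_erase T b hj₀]
    linarith

theorem sum_min_le_sum_add_of_card_filter_lt_le {ι κ : Type*} [Fintype ι] [Fintype κ]
    (f : ι → ℝ) (g : κ → ℝ) (hg : ∀ j, 0 ≤ g j) (r : ℕ) {s : ℝ} (hs : 0 ≤ s)
    (hcard : ∀ c, 0 ≤ c → #{i | c < f i} ≤ #{j | c < g j} + r) :
    ∑ i, min (f i) s ≤ ∑ j, g j + r * s := by
  have key := sum_le_sum_of_card_filter_lt_le (fun i => min (f i) s)
    (Sum.elim g fun _ : Fin r => s) univ univ (by simp [hg, hs]) fun c hc => by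
      simp only [card_filter, Fintype.sum_sum_type, Sum.elim_inl, Sum.elim_inr, lt_min_iff]
      by_cases hcs : c < s
      · simp only [hcs, and_true, ← card_filter, if_true, sum_const, card_univ, Fintype.card_fin,
          smul_eq_mul, mul_one]
        exact (hcard c hc).trans_eq (by rw [card_filter]; rfl)
      · simp [hcs]
  simpa [Fintype.sum_sum_type] using key

theorem ConcaveOn.sub_le_slope_mul {s : Set ℝ} {f : ℝ → ℝ} (hf : ConcaveOn ℝ s f) {p x y : ℝ}
    (hp : p ∈ s) (hy : y ∈ s) (hpx : p < x) (hxy : x ≤ y) :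
    f y - f x ≤ (f x - f p) / (x - p) * (y - x) := by
  rcases hxy.eq_or_lt with rfl | hxy
  · simp
  have := hf.slope_anti_adjacent hp hy hpx hxy
  rwa [div_le_iff₀ (sub_pos.2 hxy)] at this

/-- The last clause is the invariant that allows a node above `P` to be added. -/
def IsMinInterpolant (f : ℝ → ℝ) (P : Finset ℝ) (w : ℝ → ℝ) : Prop :=
  (∀ t ∈ P, 0 ≤ w t) ∧ (∀ x ∈ P, f x = ∑ t ∈ P, w t * min x t) ∧
    ∀ x ∈ P, (∀ z ∈ P, z ≤ x) → ∀ y, x ≤ y → f y - f x ≤ w x * (y - x)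

theorem sum_ite_mul_min_insert {P : Finset ℝ} {M p σ x : ℝ} (w : ℝ → ℝ) (hMP : M ∉ P)
    (hp : p = 0 ∨ p ∈ P) (hx : 0 ≤ x) :
    ∑ t ∈ insert M P, (if t = M then σ else w t - if t = p then σ else 0) * min x t =
      σ * min x M + ∑ t ∈ P, w t * min x t - σ * min x p := by
  have hcorr : ∑ t ∈ P, (if t = p then σ else 0) * min x t = σ * min x p := by
    simp only [ite_mul, zero_mul]
    rw [sum_ite_eq']
    split_ifs with hpP
    · rfl
    · rw [hp.resolve_right hpP, min_eq_right hx, mul_zero]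
  rw [sum_insert hMP, if_pos rfl, sum_congr rfl fun t ht => by
    rw [if_neg (ne_of_mem_of_not_mem ht hMP), sub_mul], sum_sub_distrib, hcorr, add_sub_assoc]

/-- The new top segment `[p, M]` has slope `σ = (f M - f p) / (M - p)`; its kink moves from `p`
to `M`. -/
theorem IsMinInterpolant.insert {f : ℝ → ℝ} (hf : ConcaveOn ℝ (Set.Ici 0) f)
    (hmono : MonotoneOn f (Set.Ici 0)) (h0 : f 0 = 0) {P : Finset ℝ} {w : ℝ → ℝ}
    (hw : IsMinInterpolant f P w) (hP : ∀ t ∈ P, 0 < t) {p M : ℝ} (hp : p = 0 ∨ p ∈ P)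
    (hp0 : 0 ≤ p) (hpP : ∀ x ∈ P, x ≤ p) (hpM : p < M) :
    IsMinInterpolant f (insert M P) fun t => if t = M then (f M - f p) / (M - p)
      else w t - if t = p then (f M - f p) / (M - p) else 0 := by
  obtain ⟨hw, hrep, hslope⟩ := hw
  set σ := (f M - f p) / (M - p)
  have hMP : M ∉ P := fun h => (hpP M h).not_gt hpM
  have hfp : f p = ∑ t ∈ P, w t * min p t := by
    rcases hp with rfl | hp
    · exact h0.trans (sum_eq_zero fun t ht => by rw [min_eq_left (hP t ht).le, mul_zero]).symm
    · exact hrep p hp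
  refine ⟨fun t ht => ?_, fun x hx => ?_, fun x hx hxmax y hxy => ?_⟩ <;> dsimp only
  · by_cases htM : t = M
    · rw [if_pos htM]
      exact div_nonneg (sub_nonneg.2 (hmono hp0 (hp0.trans hpM.le) hpM.le)) (sub_pos.2 hpM).le
    have htP : t ∈ P := (mem_insert.1 ht).resolve_left htM
    rw [if_neg htM]
    split_ifs with htp
    · rw [sub_nonneg, div_le_iff₀ (sub_pos.2 hpM)]
      subst htp
      exact hslope t htP hpP M hpM.le
    · rw [sub_zero]
      exact hw t htP
  · have hx0 : 0 ≤ x := (mem_insert.1 hx).elim (· ▸ hp0.trans hpM.le)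
      fun hxP => (hP x hxP).le
    rw [sum_ite_mul_min_insert w hMP hp hx0]
    rcases mem_insert.1 hx with rfl | hxP
    · have hσ : σ * (x - p) = f x - f p := div_mul_cancel₀ _ (sub_pos.2 hpM).ne'
      have hsum : ∑ t ∈ P, w t * min x t = f p := by
        rw [hfp]
        exact sum_congr rfl fun t ht => by
          rw [min_eq_right ((hpP t ht).trans hpM.le), min_eq_right (hpP t ht)]
      rw [min_self, min_eq_right hpM.le, hsum]
      linear_combination -hσ
    · rw [min_eq_left ((hpP x hxP).trans hpM.le), min_eq_left (hpP x hxP), ← hrep x hxP]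
      ring
  · obtain rfl : x = M := (mem_insert.1 hx).resolve_right fun hxP =>
      (hpP x hxP).not_gt (hpM.trans_le (hxmax M (mem_insert_self M P)))
    rw [if_pos rfl]
    exact hf.sub_le_slope_mul hp0 (hp0.trans (hpM.le.trans hxy)) hpM hxy

theorem exists_isMinInterpolant {f : ℝ → ℝ} (hf : ConcaveOn ℝ (Set.Ici 0) f)
    (hmono : MonotoneOn f (Set.Ici 0)) (h0 : f 0 = 0) (P : Finset ℝ) (hP : ∀ t ∈ P, 0 < t) :
    ∃ w, IsMinInterpolant f P w := by
  induction P using Finset.induction_on_max with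
  | empty => exact ⟨0, by simp [IsMinInterpolant]⟩
  | insert M P hlt ih =>
    obtain ⟨w, hw⟩ := ih fun t ht => hP t (mem_insert_of_mem ht)
    have hne : (insert 0 P).Nonempty := insert_nonempty 0 P
    have hM : 0 < M := hP M (mem_insert_self M P)
    exact ⟨_, hw.insert hf hmono h0 (fun t ht => hP t (mem_insert_of_mem ht))
      (mem_insert.1 ((insert 0 P).max'_mem hne)) ((insert 0 P).le_max' 0 (mem_insert_self 0 P))
      (fun x hx => (insert 0 P).le_max' x (mem_insert_of_mem hx))
      (((insert 0 P).max'_lt_iff hne).2 fun x hx => (mem_insert.1 hx).elim (· ▸ hM) (hlt x))⟩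

theorem sum_le_sum_of_sum_min_le {ι κ : Type*} [Fintype ι] [Fintype κ] {f : ℝ → ℝ}
    (hf : ConcaveOn ℝ (Set.Ici 0) f) (hmono : MonotoneOn f (Set.Ici 0)) (h0 : f 0 = 0)
    {x : ι → ℝ} {y : κ → ℝ} (hx : ∀ i, 0 ≤ x i) (hy : ∀ j, 0 ≤ y j)
    (hmin : ∀ s, 0 ≤ s → ∑ i, min (x i) s ≤ ∑ j, min (y j) s) :
    ∑ i, f (x i) ≤ ∑ j, f (y j) := by
  classical
  set P := {t ∈ univ.image x ∪ univ.image y | 0 < t}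
  obtain ⟨w, hw, hrep, -⟩ := exists_isMinInterpolant hf hmono h0 P fun t ht => (mem_filter.1 ht).2
  have hrep' : ∀ z, 0 ≤ z → z ∈ univ.image x ∪ univ.image y → f z = ∑ t ∈ P, w t * min z t := by
    intro z hz hzP
    rcases hz.eq_or_lt with rfl | hz
    · rw [h0]
      exact (sum_eq_zero fun t ht => by rw [min_eq_left (mem_filter.1 ht).2.le, mul_zero]).symm
    · exact hrep z (mem_filter.2 ⟨hzP, hz⟩)
  calc ∑ i, f (x i) = ∑ t ∈ P, w t * ∑ i, min (x i) t := by
        rw [sum_congr rfl fun i _ => hrep' (x i) (hx i) (by simp), sum_comm]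
        simp only [mul_sum]
    _ ≤ ∑ t ∈ P, w t * ∑ j, min (y j) t := sum_le_sum fun t ht =>
        mul_le_mul_of_nonneg_left (hmin t (mem_filter.1 ht).2.le) (hw t ht)
    _ = ∑ j, f (y j) := by
        rw [sum_congr rfl fun j _ => hrep' (y j) (hy j) (by simp), sum_comm]
        simp only [mul_sum]

theorem concaveOn_mul_div_mul_add_one {a : ℝ} (ha : 0 ≤ a) :
    ConcaveOn ℝ (Set.Ici 0) fun t => a * t / (a * t + 1) := by
  have hpos : ∀ t ∈ Set.Ici (0 : ℝ), 0 < a * t + 1 := fun t (ht : 0 ≤ t) => by positivity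
  have hinv : ConvexOn ℝ (Set.Ici 0) fun t => (a * t + 1)⁻¹ := by
    simpa [Function.comp_def] using ((convexOn_zpow (-1)).comp_affineMap
      (a • AffineMap.id ℝ ℝ + AffineMap.const ℝ ℝ (1 : ℝ))).subset hpos (convex_Ici 0)
  refine (hinv.neg.add_const 1).congr fun t ht => ?_
  have := hpos t ht
  simp only [Pi.add_apply, Pi.neg_apply]
  field_simp
  ring

theorem monotoneOn_mul_div_mul_add_one {a : ℝ} (ha : 0 ≤ a) :
    MonotoneOn (fun t => a * t / (a * t + 1)) (Set.Ici 0) := by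
  intro s hs t ht hst
  simp only
  rw [div_le_div_iff₀ (by nlinarith [Set.mem_Ici.1 hs]) (by nlinarith [Set.mem_Ici.1 ht])]
  nlinarith

section Orthonormal

variable {ι κ : Type*} [Fintype κ] [DecidableEq ι]

def OrthonormalOn (S : Finset ι) (v : ι → κ → ℝ) : Prop :=
  ∀ i ∈ S, ∀ j ∈ S, v i ⬝ᵥ v j = if i = j then 1 else 0

variable {S : Finset ι} {v : ι → κ → ℝ}

theorem OrthonormalOn.dotProduct_sum_smul (hv : OrthonormalOn S v) (c : ι → ℝ) {j : ι}
    (hj : j ∈ S) : v j ⬝ᵥ ∑ i ∈ S, c i • v i = c j := by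
  rw [dotProduct_sum, sum_congr rfl fun i hi => by
    rw [dotProduct_smul, hv j hj i hi, smul_eq_mul, mul_ite, mul_one, mul_zero], sum_ite_eq,
    if_pos hj]

theorem OrthonormalOn.sum_smul_dotProduct_self (hv : OrthonormalOn S v) (c : ι → ℝ) :
    (∑ i ∈ S, c i • v i) ⬝ᵥ ∑ i ∈ S, c i • v i = ∑ i ∈ S, c i ^ 2 := by
  rw [sum_dotProduct]
  exact sum_congr rfl fun i hi => by
    rw [smul_dotProduct, hv.dotProduct_sum_smul c hi, smul_eq_mul, sq]

theorem OrthonormalOn.sum_sq_dotProduct_le (hv : OrthonormalOn S v) (y : κ → ℝ) :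
    ∑ i ∈ S, (v i ⬝ᵥ y) ^ 2 ≤ y ⬝ᵥ y := by
  set p := ∑ i ∈ S, (v i ⬝ᵥ y) • v i
  have hpy : p ⬝ᵥ y = ∑ i ∈ S, (v i ⬝ᵥ y) ^ 2 := by
    simp only [p, sum_dotProduct, smul_dotProduct, smul_eq_mul, sq]
  have := dotProduct_star_self_nonneg (y - p)
  rw [star_trivial, sub_dotProduct, dotProduct_sub, dotProduct_sub, dotProduct_comm y p, hpy,
    hv.sum_smul_dotProduct_self] at this
  linarith

theorem OrthonormalOn.mono {T : Finset ι} (hv : OrthonormalOn S v) (hTS : T ⊆ S) :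
    OrthonormalOn T v :=
  fun i hi j hj => hv i (hTS hi) j (hTS hj)

end Orthonormal

section SVD

variable {m n : ℕ} (X : Matrix (Fin m) (Fin n) ℝ)

noncomputable def leftSingularVector (i : Fin m) : Fin m → ℝ :=
  ⇑((isHermitian_mul_conjTranspose_self X).eigenvectorBasis i)

/-- Normalised `uᵢᵀ X`; it is `0` when `σᵢ = 0`, since then `uᵢᵀ X = 0` and `0⁻¹ = 0`. -/
noncomputable def rightSingularVector (i : Fin m) : Fin n → ℝ :=
  (sv X i)⁻¹ • (leftSingularVector X i ᵥ* X)

noncomputable def partialSVD (T : Finset (Fin m)) : Matrix (Fin m) (Fin n) ℝ :=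
  ∑ i ∈ T, sv X i • vecMulVec (leftSingularVector X i) (rightSingularVector X i)

theorem sv_nonneg (i : Fin m) : 0 ≤ sv X i := Real.sqrt_nonneg _

theorem orthonormalOn_leftSingularVector : OrthonormalOn univ (leftSingularVector X) := by
  intro i _ j _
  have := congrFun₂ (Unitary.coe_star_mul_self
    (isHermitian_mul_conjTranspose_self X).eigenvectorUnitary) i j
  simpa [Matrix.mul_apply, leftSingularVector, dotProduct, Matrix.one_apply] using this

theorem sum_vecMulVec_leftSingularVector :
    ∑ i, vecMulVec (leftSingularVector X i) (leftSingularVector X i) = 1 := by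
  ext p q
  have := congrFun₂ (Unitary.coe_mul_star_self
    (isHermitian_mul_conjTranspose_self X).eigenvectorUnitary) p q
  simpa [Matrix.mul_apply, leftSingularVector, vecMulVec_apply, Matrix.sum_apply] using this

theorem mul_transpose_mulVec_leftSingularVector (i : Fin m) :
    (X * Xᵀ) *ᵥ leftSingularVector X i = sv X i ^ 2 • leftSingularVector X i := by
  rw [← conjTranspose_eq_transpose_of_trivial, sv,
    Real.sq_sqrt ((posSemidef_self_mul_conjTranspose X).eigenvalues_nonneg i)]
  exact (isHermitian_mul_conjTranspose_self X).mulVec_eigenvectorBasis i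

theorem vecMul_dotProduct_vecMul_leftSingularVector (i j : Fin m) :
    (leftSingularVector X i ᵥ* X) ⬝ᵥ (leftSingularVector X j ᵥ* X) =
      if i = j then sv X i ^ 2 else 0 := by
  rw [← dotProduct_mulVec, ← mulVec_transpose, mulVec_mulVec,
    mul_transpose_mulVec_leftSingularVector, dotProduct_smul,
    orthonormalOn_leftSingularVector X i (mem_univ i) j (mem_univ j)]
  split_ifs with h <;> simp [h]

theorem vecMul_leftSingularVector (i : Fin m) :
    leftSingularVector X i ᵥ* X = sv X i • rightSingularVector X i := by
  by_cases h : sv X i = 0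
  · rw [h, zero_smul, ← dotProduct_self_eq_zero, vecMul_dotProduct_vecMul_leftSingularVector,
      if_pos rfl, h, sq, mul_zero]
  · rw [rightSingularVector, smul_smul, mul_inv_cancel₀ h, one_smul]

theorem rightSingularVector_of_sv_eq_zero {i : Fin m} (h : sv X i = 0) :
    rightSingularVector X i = 0 := by
  simp [rightSingularVector, h]

theorem orthonormalOn_rightSingularVector :
    OrthonormalOn {i | sv X i ≠ 0} (rightSingularVector X) := by
  intro i hi j hj
  have hi : sv X i ≠ 0 := (mem_filter.1 hi).2
  have hj : sv X j ≠ 0 := (mem_filter.1 hj).2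
  have := vecMul_dotProduct_vecMul_leftSingularVector X i j
  rw [vecMul_leftSingularVector, vecMul_leftSingularVector, smul_dotProduct, dotProduct_smul,
    smul_eq_mul, smul_eq_mul] at this
  split_ifs at this ⊢ with h
  · subst h
    field_simp at this
    exact this
  · simpa [hi, hj] using this

theorem sum_sq_dotProduct_rightSingularVector_le (T : Finset (Fin m)) (y : Fin n → ℝ) :
    ∑ i ∈ T, (rightSingularVector X i ⬝ᵥ y) ^ 2 ≤ y ⬝ᵥ y := by
  rw [← sum_filter_of_ne (p := fun i => sv X i ≠ 0) fun i _ h hi => h (by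
    rw [rightSingularVector_of_sv_eq_zero X hi, zero_dotProduct, sq, mul_zero])]
  exact ((orthonormalOn_rightSingularVector X).mono fun i hi => by
    simp only [mem_filter] at hi ⊢; exact ⟨mem_univ i, hi.2⟩).sum_sq_dotProduct_le y

theorem partialSVD_univ : partialSVD X univ = X := by
  have hterm (i : Fin m) : sv X i • vecMulVec (leftSingularVector X i) (rightSingularVector X i) =
      vecMulVec (leftSingularVector X i) (leftSingularVector X i) * X := by
    rw [vecMulVec_mul, vecMul_leftSingularVector, vecMulVec_smul]
  rw [partialSVD, sum_congr rfl fun i _ => hterm i, ← Matrix.sum_mul,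
    sum_vecMulVec_leftSingularVector, Matrix.one_mul]

theorem partialSVD_filter_add_filter_not (p : Fin m → Prop) [DecidablePred p] :
    partialSVD X {i | p i} + partialSVD X {i | ¬ p i} = X := by
  rw [partialSVD, partialSVD, sum_filter_add_sum_filter_not, ← partialSVD, partialSVD_univ]

theorem partialSVD_mulVec (T : Finset (Fin m)) (y : Fin n → ℝ) :
    partialSVD X T *ᵥ y =
      ∑ i ∈ T, (sv X i * (rightSingularVector X i ⬝ᵥ y)) • leftSingularVector X i := by
  simp only [partialSVD, sum_mulVec, smul_mulVec, vecMulVec_mulVec, op_smul_eq_smul, smul_smul]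

theorem dotProduct_self_partialSVD_mulVec (T : Finset (Fin m)) (y : Fin n → ℝ) :
    (partialSVD X T *ᵥ y) ⬝ᵥ (partialSVD X T *ᵥ y) =
      ∑ i ∈ T, sv X i ^ 2 * (rightSingularVector X i ⬝ᵥ y) ^ 2 := by
  rw [partialSVD_mulVec,
    ((orthonormalOn_leftSingularVector X).mono (subset_univ T)).sum_smul_dotProduct_self]
  simp only [mul_pow]

end SVD

section Nuclear

variable {m n : ℕ}

def IsContraction (Q : Matrix (Fin m) (Fin n) ℝ) : Prop :=
  ∀ y, (Q *ᵥ y) ⬝ᵥ (Q *ᵥ y) ≤ y ⬝ᵥ y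

theorem IsContraction.dotProduct_mulVec_le_one {Q : Matrix (Fin m) (Fin n) ℝ}
    (hQ : IsContraction Q) {u : Fin m → ℝ} {v : Fin n → ℝ} (hu : u ⬝ᵥ u = 1) (hv : v ⬝ᵥ v = 1) :
    u ⬝ᵥ (Q *ᵥ v) ≤ 1 := by
  have hcs : (u ⬝ᵥ (Q *ᵥ v)) ^ 2 ≤ (u ⬝ᵥ u) * ((Q *ᵥ v) ⬝ᵥ (Q *ᵥ v)) := by
    simpa only [dotProduct, sq] using sum_mul_sq_le_sq_mul_sq univ u (Q *ᵥ v)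
  have hsq : (u ⬝ᵥ (Q *ᵥ v)) ^ 2 ≤ 1 ^ 2 := by
    have := hQ v
    rw [hu, one_mul] at hcs
    rw [hv] at this
    linarith
  exact (le_abs_self _).trans (abs_le_of_sq_le_sq hsq zero_le_one)

theorem trace_transpose_mul_partialSVD_le {Q : Matrix (Fin m) (Fin n) ℝ} (hQ : IsContraction Q)
    (X : Matrix (Fin m) (Fin n) ℝ) (T : Finset (Fin m)) :
    (Qᵀ * partialSVD X T).trace ≤ ∑ i ∈ T, sv X i := by
  rw [partialSVD, Matrix.mul_sum, trace_sum]
  refine sum_le_sum fun i _ => ?_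
  rw [Matrix.mul_smul, trace_smul, mul_vecMulVec, trace_vecMulVec, smul_eq_mul, mulVec_transpose,
    ← dotProduct_mulVec]
  by_cases h : sv X i = 0
  · simp [h]
  have hu := orthonormalOn_leftSingularVector X i (mem_univ i) i (mem_univ i)
  have hv := orthonormalOn_rightSingularVector X i (by simpa using h) i (by simpa using h)
  rw [if_pos rfl] at hu hv
  exact mul_le_of_le_one_right (sv_nonneg X i) (hQ.dotProduct_mulVec_le_one hu hv)

theorem trace_transpose_mul_le_nuclearNorm {Q : Matrix (Fin m) (Fin n) ℝ} (hQ : IsContraction Q)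
    (X : Matrix (Fin m) (Fin n) ℝ) : (Qᵀ * X).trace ≤ nuclearNorm X := by
  simpa only [partialSVD_univ, nuclearNorm] using trace_transpose_mul_partialSVD_le hQ X univ

noncomputable def nuclearDual (X : Matrix (Fin m) (Fin n) ℝ) : Matrix (Fin m) (Fin n) ℝ :=
  ∑ i, vecMulVec (leftSingularVector X i) (rightSingularVector X i)

theorem nuclearDual_mulVec (X : Matrix (Fin m) (Fin n) ℝ) (y : Fin n → ℝ) :
    nuclearDual X *ᵥ y = ∑ i, (rightSingularVector X i ⬝ᵥ y) • leftSingularVector X i := by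
  simp only [nuclearDual, sum_mulVec, vecMulVec_mulVec, op_smul_eq_smul]

theorem isContraction_nuclearDual (X : Matrix (Fin m) (Fin n) ℝ) : IsContraction (nuclearDual X) :=
  fun y => by
    rw [nuclearDual_mulVec, (orthonormalOn_leftSingularVector X).sum_smul_dotProduct_self]
    exact sum_sq_dotProduct_rightSingularVector_le X univ y

theorem trace_transpose_nuclearDual_mul (X : Matrix (Fin m) (Fin n) ℝ) :
    ((nuclearDual X)ᵀ * X).trace = nuclearNorm X := by
  rw [show ((nuclearDual X)ᵀ * X).trace = ((nuclearDual X)ᵀ * partialSVD X univ).trace by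
    rw [partialSVD_univ], partialSVD, Matrix.mul_sum, trace_sum, nuclearNorm]
  refine sum_congr rfl fun j _ => ?_
  rw [Matrix.mul_smul, trace_smul, mul_vecMulVec, trace_vecMulVec, smul_eq_mul, mulVec_transpose,
    ← dotProduct_mulVec]
  by_cases h : sv X j = 0
  · simp [h]
  have hj : j ∈ ({i | sv X i ≠ 0} : Finset (Fin m)) := by simpa using h
  rw [nuclearDual_mulVec, (orthonormalOn_leftSingularVector X).dotProduct_sum_smul _ (mem_univ j),
    orthonormalOn_rightSingularVector X j hj j hj, if_pos rfl, mul_one]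

theorem nuclearNorm_add_le (X Y : Matrix (Fin m) (Fin n) ℝ) :
    nuclearNorm (X + Y) ≤ nuclearNorm X + nuclearNorm Y := by
  rw [← trace_transpose_nuclearDual_mul (X + Y), Matrix.mul_add, trace_add]
  exact add_le_add (trace_transpose_mul_le_nuclearNorm (isContraction_nuclearDual _) X)
    (trace_transpose_mul_le_nuclearNorm (isContraction_nuclearDual _) Y)

theorem nuclearNorm_partialSVD_le (X : Matrix (Fin m) (Fin n) ℝ) (T : Finset (Fin m)) :
    nuclearNorm (partialSVD X T) ≤ ∑ i ∈ T, sv X i := by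
  rw [← trace_transpose_nuclearDual_mul]
  exact trace_transpose_mul_partialSVD_le (isContraction_nuclearDual _) X T

end Nuclear

section Rank

variable {ι κ R : Type*} [Fintype κ] [Field R]

theorem Matrix.rank_add_le_s3 (A B : Matrix ι κ R) : (A + B).rank ≤ A.rank + B.rank := by
  rw [Matrix.rank, Matrix.rank, Matrix.rank, mulVecLin_add]
  exact (Submodule.finrank_mono (LinearMap.range_add_le _ _)).trans
    (Submodule.finrank_add_le_finrank_add_finrank _ _)

theorem Matrix.rank_sum_le {α : Type*} (T : Finset α) (A : α → Matrix ι κ R) :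
    (∑ i ∈ T, A i).rank ≤ ∑ i ∈ T, (A i).rank := by
  classical
  induction T using Finset.induction with
  | empty => simp
  | insert i T hi ih =>
    rw [sum_insert hi, sum_insert hi]
    exact (Matrix.rank_add_le_s3 _ _).trans (Nat.add_le_add_left ih _)

theorem exists_ne_zero_mulVec_sum_smul_eq_zero {α : Type*} [Fintype α] (D : Matrix ι κ R)
    (w : α → κ → R) (hD : D.rank < Fintype.card α) :
    ∃ a : α → R, a ≠ 0 ∧ D *ᵥ ∑ i, a i • w i = 0 := by
  let L := D.mulVecLin ∘ₗ Fintype.linearCombination R w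
  have hker : 0 < Module.finrank R (LinearMap.ker L) := by
    have hrange : Module.finrank R (LinearMap.range L) ≤ D.rank :=
      Submodule.finrank_mono (LinearMap.range_comp_le_range _ _)
    have := L.finrank_range_add_finrank_ker
    rw [Module.finrank_fintype_fun_eq_card] at this
    omega
  obtain ⟨⟨a, ha⟩, ha0⟩ := Module.finrank_pos_iff_exists_ne_zero.1 hker
  refine ⟨a, fun h => ha0 (by simp [h]), ?_⟩
  simpa only [L, LinearMap.mem_ker, LinearMap.comp_apply, Fintype.linearCombination_apply,
    mulVecLin_apply] using ha

end Rank

section LowRank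

variable {m n : ℕ}

theorem rank_partialSVD_le (X : Matrix (Fin m) (Fin n) ℝ) (T : Finset (Fin m)) :
    (partialSVD X T).rank ≤ #T := by
  calc (partialSVD X T).rank
      ≤ ∑ i ∈ T, (sv X i • vecMulVec (leftSingularVector X i) (rightSingularVector X i)).rank :=
        Matrix.rank_sum_le _ _
    _ ≤ ∑ _i ∈ T, 1 := sum_le_sum fun i _ => by
        rw [← smul_vecMulVec]
        exact rank_vecMulVec_le _ _
    _ = #T := by simp

theorem dotProduct_self_partialSVD_mulVec_le (X : Matrix (Fin m) (Fin n) ℝ) {c : ℝ}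
    (y : Fin n → ℝ) :
    (partialSVD X {i | sv X i ≤ c} *ᵥ y) ⬝ᵥ (partialSVD X {i | sv X i ≤ c} *ᵥ y) ≤
      c ^ 2 * (y ⬝ᵥ y) := by
  rw [dotProduct_self_partialSVD_mulVec]
  calc ∑ i ∈ {i | sv X i ≤ c}, sv X i ^ 2 * (rightSingularVector X i ⬝ᵥ y) ^ 2
      ≤ ∑ i ∈ {i | sv X i ≤ c}, c ^ 2 * (rightSingularVector X i ⬝ᵥ y) ^ 2 :=
        sum_le_sum fun i hi => mul_le_mul_of_nonneg_right
          (pow_le_pow_left₀ (sv_nonneg X i) (mem_filter.1 hi).2 2) (sq_nonneg _)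
    _ ≤ c ^ 2 * (y ⬝ᵥ y) := by
        rw [← mul_sum]
        exact mul_le_mul_of_nonneg_left (sum_sq_dotProduct_rightSingularVector_le X _ y)
          (sq_nonneg c)

/-- Eckart–Young, in counting form. -/
theorem card_lt_sv_le_of_rank_le {X D : Matrix (Fin m) (Fin n) ℝ} {k : ℕ} {c : ℝ}
    (hD : D.rank ≤ k) (hc : 0 ≤ c)
    (happrox : ∀ y, ((X - D) *ᵥ y) ⬝ᵥ ((X - D) *ᵥ y) ≤ c ^ 2 * (y ⬝ᵥ y)) :
    #{i | c < sv X i} ≤ k := by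
  set S : Finset (Fin m) := {i | c < sv X i}
  by_contra! hk
  -- a nonzero `y` in the span of the `vᵢ`, `i ∈ S`, with `D y = 0` would have `‖X y‖ > c ‖y‖`
  obtain ⟨a, ha0, hDy⟩ := exists_ne_zero_mulVec_sum_smul_eq_zero D
    (fun i : S => rightSingularVector X i) (by simpa using hD.trans_lt hk)
  set y := ∑ i : S, a i • rightSingularVector X i
  have hv : OrthonormalOn univ fun i : S => rightSingularVector X i := fun i _ j _ => by
    have hS : ∀ i : S, (i : Fin m) ∈ ({i | sv X i ≠ 0} : Finset (Fin m)) := fun i => by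
      simpa using (hc.trans_lt (mem_filter.1 i.2).2).ne'
    rw [orthonormalOn_rightSingularVector X i (hS i) j (hS j)]
    exact if_congr Subtype.ext_iff.symm rfl rfl
  have hXy : ∑ i : S, sv X i ^ 2 * a i ^ 2 ≤ (X *ᵥ y) ⬝ᵥ (X *ᵥ y) := by
    have := dotProduct_self_partialSVD_mulVec X univ y
    rw [partialSVD_univ] at this
    rw [this]
    calc ∑ i : S, sv X i ^ 2 * a i ^ 2
        = ∑ i ∈ S, sv X i ^ 2 * (rightSingularVector X i ⬝ᵥ y) ^ 2 := by
          rw [← sum_coe_sort S]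
          exact sum_congr rfl fun i _ => by rw [hv.dotProduct_sum_smul a (mem_univ i)]
      _ ≤ _ := sum_le_sum_of_subset_of_nonneg (subset_univ S) fun i _ _ => by positivity
  have hlt : ∑ i : S, c ^ 2 * a i ^ 2 < ∑ i : S, sv X i ^ 2 * a i ^ 2 := by
    obtain ⟨i, hi⟩ := Function.ne_iff.1 ha0
    have hc2 : ∀ i : S, c ^ 2 < sv X i ^ 2 := fun i =>
      pow_lt_pow_left₀ (mem_filter.1 i.2).2 hc two_ne_zero
    exact sum_lt_sum (fun i _ => mul_le_mul_of_nonneg_right (hc2 i).le (sq_nonneg _))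
      ⟨i, mem_univ i, mul_lt_mul_of_pos_right (hc2 i) (pow_two_pos_of_ne_zero hi)⟩
  have := happrox y
  rw [sub_mulVec, hDy, sub_zero, hv.sum_smul_dotProduct_self, mul_sum] at this
  linarith

/-- Weyl's inequality for low-rank perturbations, in counting form. -/
theorem card_lt_sv_add_le {M C : Matrix (Fin m) (Fin n) ℝ} {r : ℕ} (hC : C.rank ≤ r) {c : ℝ}
    (hc : 0 ≤ c) : #{i | c < sv (M + C) i} ≤ #{i | c < sv M i} + r := by
  have hsplit := partialSVD_filter_add_filter_not M fun i => c < sv M i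
  simp only [not_lt] at hsplit
  refine card_lt_sv_le_of_rank_le (D := C + partialSVD M {i | c < sv M i}) ?_ hc fun y => ?_
  · exact (Matrix.rank_add_le_s3 _ _).trans (by linarith [rank_partialSVD_le M {i | c < sv M i}])
  · rw [show M + C - (C + partialSVD M {i | c < sv M i}) = partialSVD M {i | sv M i ≤ c} by
      rw [eq_sub_of_add_eq' hsplit]; abel]
    exact dotProduct_self_partialSVD_mulVec_le M y

end LowRank

section ClippedNuclearNorm

variable {m n : ℕ}

theorem sum_min_sv_add_le_of_rank_le (M : Matrix (Fin m) (Fin n) ℝ) {C : Matrix (Fin m) (Fin n) ℝ}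
    {r : ℕ} (hC : C.rank ≤ r) {s : ℝ} (hs : 0 ≤ s) :
    ∑ i, min (sv (M + C) i) s ≤ nuclearNorm M + r * s :=
  sum_min_le_sum_add_of_card_filter_lt_le _ _ (sv_nonneg M) r hs fun _ hc => card_lt_sv_add_le hC hc

theorem exists_nuclearNorm_add_mul_le_sum_min_sv (X : Matrix (Fin m) (Fin n) ℝ) (s : ℝ) :
    ∃ (M : Matrix (Fin m) (Fin n) ℝ) (k : ℕ),
      (X - M).rank ≤ k ∧ nuclearNorm M + k * s ≤ ∑ i, min (sv X i) s := by
  have hsplit := partialSVD_filter_add_filter_not X fun i => s < sv X i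
  simp only [not_lt] at hsplit
  refine ⟨partialSVD X {i | sv X i ≤ s}, #{i | s < sv X i}, ?_, ?_⟩
  · rw [← eq_sub_of_add_eq hsplit]
    exact rank_partialSVD_le X _
  · rw [← sum_filter_add_sum_filter_not univ (fun i => s < sv X i), sum_congr rfl
      fun i hi => min_eq_right (mem_filter.1 hi).2.le, sum_const, nsmul_eq_mul, sum_congr rfl
      fun i hi => min_eq_left (not_lt.1 (mem_filter.1 hi).2)]
    simp only [not_lt]
    linarith [nuclearNorm_partialSVD_le X {i | sv X i ≤ s}]

theorem sum_min_sv_add_le (X Y : Matrix (Fin m) (Fin n) ℝ) {s : ℝ} (hs : 0 ≤ s) :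
    ∑ i, min (sv (X + Y) i) s ≤ ∑ i, min (sv X i) s + ∑ i, min (sv Y i) s := by
  obtain ⟨M₁, k₁, hX, hM₁⟩ := exists_nuclearNorm_add_mul_le_sum_min_sv X s
  obtain ⟨M₂, k₂, hY, hM₂⟩ := exists_nuclearNorm_add_mul_le_sum_min_sv Y s
  have h := sum_min_sv_add_le_of_rank_le (M₁ + M₂)
    ((Matrix.rank_add_le_s3 _ _).trans (Nat.add_le_add hX hY)) hs
  rw [show M₁ + M₂ + (X - M₁ + (Y - M₂)) = X + Y by abel] at h
  push_cast at h
  linarith [nuclearNorm_add_le M₁ M₂]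

end ClippedNuclearNorm

theorem statement3_general (m n : ℕ) (a : ℝ) (ha : 0 < a)
    (X Y : Matrix (Fin m) (Fin n) ℝ) :
    Pa a (X + Y) ≤ Pa a X + Pa a Y := by
  have key := sum_le_sum_of_sum_min_le (concaveOn_mul_div_mul_add_one ha.le)
    (monotoneOn_mul_div_mul_add_one ha.le) (by simp) (sv_nonneg (X + Y))
    (y := Sum.elim (sv X) (sv Y)) (Sum.forall.2 ⟨sv_nonneg X, sv_nonneg Y⟩) fun s hs => by
      simpa only [Fintype.sum_sum_type, Sum.elim_inl, Sum.elim_inr] using sum_min_sv_add_le X Y hs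
  simpa only [Pa, Fintype.sum_sum_type, Sum.elim_inl, Sum.elim_inr] using key

theorem statement3 (m n : ℕ) (hmn : m ≤ n) (a : ℝ) (ha : 0 < a)
    (X Y : Matrix (Fin m) (Fin n) ℝ) :
    Pa a (X + Y) ≤ Pa a X + Pa a Y :=
  statement3_general m n a ha X Y
end

section
/- Let a > 1, let K and T be positive integers, and let R ∈ ℝ^{m×n} (m ≤ n) have singular value decomposition R = U·Diag(σ₁(R), …, σ_m(R))·Vᵀ with σ₁(R) ≥ ⋯ ≥ σ_m(R). Let R₀ be the matrix obtained from this SVD by keeping only the 2T largest singular values (setting the rest to zero), let R_c = R − R₀, let r_c = rank(R_c) and σ₁(R_c) its largest singular value, and for each integer i ≥ 1 let R_i be the matrix obtained from the SVD by keeping only the singular values with indices in I_i = {K(i−1)+2T+1, …, Ki+2T}, so that R_c = Σ_{i≥1} R_i, each rank(R_i) ≤ K, and σ_j(R_i) ≤ σ_k(R_{i−1}) whenever j ∈ I_i, k ∈ I_{i−1}. Let γ > a·(a·r_c − a + 1)·σ₁(R_c)/(a − 1) with γ > 0, and suppose moreover that P_a(γ⁻¹·R_c) ≤ P_a(γ⁻¹·R₀).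 Then Σ_{i≥2} ‖γ⁻¹·R_i‖_F ≤ Σ_{i≥2} P_a(γ⁻¹·R_{i−1})/√K ≤ P_a(γ⁻¹·R₀)/√K. -/
open Matrix Filter

section AUX
open Polynomial

lemma my_charpoly_conj {m : ℕ} (W D : Matrix (Fin m) (Fin m) ℝ) (hW : W * Wᵀ = 1) :
    (W * D * Wᵀ).charpoly = D.charpoly := by
  have hone : (W.map (C : ℝ →+* ℝ[X])) * (Wᵀ.map (C : ℝ →+* ℝ[X])) = 1 := by
    rw [← Matrix.map_mul, hW]
    exact Matrix.map_one _ (map_zero _) (map_one _)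
  have key : charmatrix (W * D * Wᵀ) =
      W.map (C : ℝ →+* ℝ[X]) * charmatrix D * (Wᵀ.map (C : ℝ →+* ℝ[X])) := by
    rw [charmatrix, charmatrix, RingHom.mapMatrix_apply, RingHom.mapMatrix_apply,
      mul_sub, sub_mul]
    congr 1
    · have hc : W.map (C : ℝ →+* ℝ[X]) * Matrix.scalar (Fin m) (X : ℝ[X])
          = Matrix.scalar (Fin m) (X : ℝ[X]) * W.map (C : ℝ →+* ℝ[X]) :=
        (Matrix.scalar_commute (X : ℝ[X]) (fun r => Commute.all _ _) _).eq.symm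
      rw [hc, mul_assoc, hone, mul_one]
    · rw [← Matrix.map_mul, ← Matrix.map_mul]
  rw [Matrix.charpoly, Matrix.charpoly, key, Matrix.det_mul, Matrix.det_mul]
  have hdet : (W.map (C : ℝ →+* ℝ[X])).det * ((Wᵀ.map (C : ℝ →+* ℝ[X]))).det = 1 := by
    rw [← Matrix.det_mul, hone, Matrix.det_one]
  calc (W.map (C : ℝ →+* ℝ[X])).det * (charmatrix D).det * ((Wᵀ.map (C : ℝ →+* ℝ[X]))).det
      = (charmatrix D).det * ((W.map (C : ℝ →+* ℝ[X])).det * ((Wᵀ.map (C : ℝ →+* ℝ[X]))).det) := by ring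
    _ = (charmatrix D).det := by rw [hdet, mul_one]

lemma eig_multiset {m : ℕ} {A : Matrix (Fin m) (Fin m) ℝ} (hA : A.IsHermitian)
    (W : Matrix (Fin m) (Fin m) ℝ) (hW : W * Wᵀ = 1) (d : Fin m → ℝ)
    (hAd : A = W * Matrix.diagonal d * Wᵀ) :
    Finset.univ.val.map hA.eigenvalues = Finset.univ.val.map d := by
  have hdiagcp : ∀ (e : Fin m → ℝ), (Matrix.diagonal e).charpoly
      = ((Finset.univ.val.map e).map (fun a => X - C a)).prod := by
    intro e
    rw [Matrix.charpoly_of_upperTriangular _ (Matrix.blockTriangular_diagonal e),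
      Finset.prod_eq_multiset_prod, Multiset.map_map]
    simp [Function.comp_def]
  set Umat : Matrix (Fin m) (Fin m) ℝ := (hA.eigenvectorUnitary : Matrix (Fin m) (Fin m) ℝ)
  have hU1 : Umat * Umatᵀ = 1 := by
    have := (Matrix.mem_unitaryGroup_iff).mp hA.eigenvectorUnitary.2
    rwa [Matrix.star_eq_conjTranspose, Matrix.conjTranspose_eq_transpose_of_trivial] at this
  have hspec : A = Umat * Matrix.diagonal hA.eigenvalues * Umatᵀ := by
    have := hA.spectral_theorem
    rwa [Unitary.conjStarAlgAut_apply, Matrix.star_eq_conjTranspose, Matrix.conjTranspose_eq_transpose_of_trivial,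
      RCLike.ofReal_real_eq_id, Function.id_comp] at this
  have h1 : A.charpoly = ((Finset.univ.val.map hA.eigenvalues).map (fun a => X - C a)).prod := by
    conv_lhs => rw [hspec]
    rw [my_charpoly_conj _ _ hU1, hdiagcp]
  have h2 : A.charpoly = ((Finset.univ.val.map d).map (fun a => X - C a)).prod := by
    conv_lhs => rw [hAd]
    rw [my_charpoly_conj _ _ hW, hdiagcp]
  have := congrArg Polynomial.roots (h1.symm.trans h2)
  rwa [Polynomial.roots_multiset_prod_X_sub_C, Polynomial.roots_multiset_prod_X_sub_C] at this

lemma diagRect_mul_transpose {m n : ℕ} (hmn : m ≤ n) (τ : Fin m → ℝ) :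
    diagRect (n := n) τ * (diagRect (n := n) τ)ᵀ = Matrix.diagonal (fun i => τ i ^ 2) := by
  ext i k
  rw [Matrix.mul_apply]
  by_cases h : i = k
  · subst h
    rw [Matrix.diagonal_apply_eq]
    rw [Finset.sum_eq_single (Fin.castLE hmn i)]
    · simp [diagRect, sq]
    · intro j _ hj
      have hj2 : ¬((j : ℕ) = (i : ℕ)) := fun hc => hj (Fin.ext (by simpa using hc))
      simp only [diagRect, Matrix.transpose_apply, Matrix.of_apply, if_neg hj2, zero_mul]
    · intro hc; exact absurd (Finset.mem_univ _) hc
  · rw [Matrix.diagonal_apply_ne _ h]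
    apply Finset.sum_eq_zero
    intro j _
    simp only [diagRect, Matrix.transpose_apply, Matrix.of_apply]
    by_cases h1 : (j : ℕ) = (i : ℕ)
    · have h2 : ¬((j : ℕ) = (k : ℕ)) := fun hc => h (Fin.ext (h1.symm.trans hc))
      rw [if_neg h2, mul_zero]
    · rw [if_neg h1, zero_mul]

lemma XXt {m n : ℕ} (hmn : m ≤ n) (U : Matrix (Fin m) (Fin m) ℝ) (V : Matrix (Fin n) (Fin n) ℝ)
    (hV : Vᵀ * V = 1) (τ : Fin m → ℝ) :
    (U * diagRect (n := n) τ * Vᵀ) * (U * diagRect (n := n) τ * Vᵀ)ᵀ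
      = U * Matrix.diagonal (fun i => τ i ^ 2) * Uᵀ := by
  rw [Matrix.transpose_mul, Matrix.transpose_mul, Matrix.transpose_transpose]
  rw [Matrix.mul_assoc, Matrix.mul_assoc, Matrix.mul_assoc, ← Matrix.mul_assoc Vᵀ V, hV, Matrix.one_mul,
    ← Matrix.mul_assoc (diagRect (n := n) τ), diagRect_mul_transpose hmn, ← Matrix.mul_assoc]

lemma sv_multiset {m n : ℕ} (hmn : m ≤ n) (U : Matrix (Fin m) (Fin m) ℝ)
    (V : Matrix (Fin n) (Fin n) ℝ) (hU : Uᵀ * U = 1) (hV : Vᵀ * V = 1)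
    (τ : Fin m → ℝ) (hτ : ∀ i, 0 ≤ τ i) :
    Finset.univ.val.map (sv (U * diagRect (n := n) τ * Vᵀ)) = Finset.univ.val.map τ := by
  set X := U * diagRect (n := n) τ * Vᵀ with hX
  have hXXt : X * Xᴴ = U * Matrix.diagonal (fun i => τ i ^ 2) * Uᵀ := by
    rw [Matrix.conjTranspose_eq_transpose_of_trivial]
    exact XXt hmn U V hV τ
  have hUU : U * Uᵀ = 1 := mul_eq_one_comm.mp hU
  have hmul := eig_multiset (Matrix.isHermitian_mul_conjTranspose_self X) U hUU _ hXXt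
  have hsv : Finset.univ.val.map (sv X)
      = (Finset.univ.val.map
          (Matrix.isHermitian_mul_conjTranspose_self X).eigenvalues).map Real.sqrt := by
    rw [Multiset.map_map]; rfl
  rw [hsv, hmul, Multiset.map_map]
  apply Multiset.map_congr rfl
  intro i _
  simp only [Function.comp_apply]
  exact Real.sqrt_sq (hτ i)

lemma sum_f_sv {m n : ℕ} (hmn : m ≤ n) (U : Matrix (Fin m) (Fin m) ℝ)
    (V : Matrix (Fin n) (Fin n) ℝ) (hU : Uᵀ * U = 1) (hV : Vᵀ * V = 1)
    (τ : Fin m → ℝ) (hτ : ∀ i, 0 ≤ τ i) (f : ℝ → ℝ) :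
    ∑ i, f (sv (U * diagRect (n := n) τ * Vᵀ) i) = ∑ i, f (τ i) := by
  have h := congrArg (fun s => (s.map f).sum) (sv_multiset hmn U V hU hV τ hτ)
  simp only [Multiset.map_map] at h
  rw [Finset.sum_eq_multiset_sum, Finset.sum_eq_multiset_sum]
  exact h

lemma exists_sv_eq {m n : ℕ} (hmn : m ≤ n) (U : Matrix (Fin m) (Fin m) ℝ)
    (V : Matrix (Fin n) (Fin n) ℝ) (hU : Uᵀ * U = 1) (hV : Vᵀ * V = 1)
    (τ : Fin m → ℝ) (hτ : ∀ i, 0 ≤ τ i) (i : Fin m) :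
    ∃ j, sv (U * diagRect (n := n) τ * Vᵀ) j = τ i := by
  have h := sv_multiset hmn U V hU hV τ hτ
  have : τ i ∈ Finset.univ.val.map τ := Multiset.mem_map.mpr ⟨i, Finset.mem_univ i, rfl⟩
  rw [← h] at this
  obtain ⟨j, _, hj⟩ := Multiset.mem_map.mp this
  exact ⟨j, hj⟩

noncomputable def gfun (a x : ℝ) : ℝ := a * x / (a * x + 1)

lemma gfun_zero (a : ℝ) : gfun a 0 = 0 := by simp [gfun]

lemma gfun_nonneg {a x : ℝ} (ha : 0 < a) (hx : 0 ≤ x) : 0 ≤ gfun a x :=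
  div_nonneg (mul_nonneg ha.le hx) (by nlinarith)

lemma gfun_mono {a x y : ℝ} (ha : 0 < a) (hx : 0 ≤ x) (hxy : x ≤ y) : gfun a x ≤ gfun a y := by
  unfold gfun
  rw [div_le_div_iff₀ (by nlinarith) (by nlinarith)]
  nlinarith

lemma le_gfun {a x : ℝ} (ha : 0 < a) (hx : 0 ≤ x) (h : a * x + 1 ≤ a) : x ≤ gfun a x := by
  unfold gfun
  rw [le_div_iff₀ (by nlinarith)]
  nlinarith

lemma rank_zero_eq_zero {m n : ℕ} (A : Matrix (Fin m) (Fin n) ℝ) (h : A.rank = 0) : A = 0 := by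
  have hrange : LinearMap.range A.mulVecLin = ⊥ := by
    rw [Matrix.rank] at h
    exact Submodule.finrank_eq_zero.mp h
  have hv : ∀ v, A.mulVecLin v = 0 := fun v => by
    have hmem : A.mulVecLin v ∈ (⊥ : Submodule ℝ (Fin m → ℝ)) :=
      hrange ▸ LinearMap.mem_range_self _ v
    simpa using hmem
  ext i j
  have := congrFun (hv (Pi.single j 1)) i
  simpa [Matrix.mulVecLin_apply, Matrix.mulVec_single] using this

end AUX

set_option maxHeartbeats 3200000 in
theorem statement8 (m n K T : ℕ) (hm : 0 < m) (hmn : m ≤ n) (hK : 0 < K) (hT : 0 < T)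
    (a γ : ℝ) (ha : 1 < a) (hγpos : 0 < γ)
    (U : Matrix (Fin m) (Fin m) ℝ) (V : Matrix (Fin n) (Fin n) ℝ)
    (hU : Uᵀ * U = 1) (hV : Vᵀ * V = 1)
    (σ : Fin m → ℝ) (hσanti : Antitone σ) (hσ0 : ∀ i, 0 ≤ σ i)
    (R R₀ Rc : Matrix (Fin m) (Fin n) ℝ) (Ri : ℕ → Matrix (Fin m) (Fin n) ℝ)
    (hR : R = U * diagRect σ * Vᵀ)
    (hR₀ : R₀ = U * diagRect (fun i => if (i : ℕ) < 2 * T then σ i else 0) * Vᵀ)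
    (hRc : Rc = R - R₀)
    (hRi : ∀ i : ℕ, Ri i =
      U * diagRect (fun j =>
        if K * (i - 1) + 2 * T ≤ (j : ℕ) ∧ (j : ℕ) < K * i + 2 * T then σ j else 0) * Vᵀ)
    (hγ : γ > a * (a * (Rc.rank : ℝ) - a + 1) * svSorted Rc ⟨0, hm⟩ / (a - 1))
    (hPc : Pa a (γ⁻¹ • Rc) ≤ Pa a (γ⁻¹ • R₀)) :
    (∑' i : ℕ, frobNorm (γ⁻¹ • Ri (i + 2))
        ≤ ∑' i : ℕ, Pa a (γ⁻¹ • Ri (i + 1)) / Real.sqrt K) ∧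
      (∑' i : ℕ, Pa a (γ⁻¹ • Ri (i + 1)) / Real.sqrt K
        ≤ Pa a (γ⁻¹ • R₀) / Real.sqrt K) := by
  classical
  have ha0 : (0:ℝ) < a := lt_trans one_pos ha
  have hγinv : (0:ℝ) ≤ γ⁻¹ := inv_nonneg.mpr hγpos.le
  -- τ functions
  set τc : Fin m → ℝ := fun j => if (j:ℕ) < 2*T then 0 else σ j with hτcdef
  have hτc0 : ∀ j, 0 ≤ τc j := fun j => by
    simp only [hτcdef]; split_ifs with h; exacts [le_refl 0, hσ0 j]
  -- Rc factorization
  have hRc' : Rc = U * diagRect (n := n) τc * Vᵀ := by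
    rw [hRc, show R = U * diagRect (n := n) σ * Vᵀ from hR,
      show R₀ = U * diagRect (n := n) (fun i => if (i : ℕ) < 2 * T then σ i else 0) * Vᵀ from hR₀,
      ← Matrix.sub_mul, ← Matrix.mul_sub]
    congr 1
    congr 1
    ext i j
    simp only [diagRect, Matrix.sub_apply, Matrix.of_apply, hτcdef]
    split_ifs <;> ring
  -- smul lemma
  have hsmul : ∀ (τ : Fin m → ℝ),
      γ⁻¹ • (U * diagRect (n := n) τ * Vᵀ) = U * diagRect (n := n) (fun j => γ⁻¹ * τ j) * Vᵀ := by
    intro τ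
    rw [show diagRect (n := n) (fun j => γ⁻¹ * τ j) = γ⁻¹ • diagRect (n := n) τ by
      ext i j; simp [diagRect, mul_ite]]
    rw [Matrix.mul_smul, Matrix.smul_mul]
  -- Pa formula
  have hPaf : ∀ (τ : Fin m → ℝ), (∀ j, 0 ≤ τ j) →
      Pa a (γ⁻¹ • (U * diagRect (n := n) τ * Vᵀ)) = ∑ j, gfun a (γ⁻¹ * τ j) := by
    intro τ hτ
    rw [hsmul τ]
    exact sum_f_sv hmn U V hU hV _ (fun j => mul_nonneg hγinv (hτ j)) (gfun a)
  -- Frobenius formula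
  have hfrobf : ∀ (τ : Fin m → ℝ),
      frobNorm (U * diagRect (n := n) τ * Vᵀ) = Real.sqrt (∑ j, τ j ^ 2) := by
    intro τ
    unfold frobNorm
    congr 1
    have h1 : ∑ i, ∑ j, (U * diagRect (n := n) τ * Vᵀ) i j ^ 2
        = Matrix.trace ((U * diagRect (n := n) τ * Vᵀ) * (U * diagRect (n := n) τ * Vᵀ)ᵀ) := by
      rw [Matrix.trace]
      apply Finset.sum_congr rfl
      intro i _
      rw [Matrix.diag_apply, Matrix.mul_apply]
      exact Finset.sum_congr rfl fun j _ => by rw [Matrix.transpose_apply, sq]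
    rw [h1, XXt hmn U V hV τ, Matrix.trace_mul_cycle, hU, Matrix.one_mul,
      Matrix.trace_diagonal]
  -- sv bounded by top sorted singular value
  have hsvle : ∀ j, sv Rc j ≤ svSorted Rc ⟨0, hm⟩ := by
    intro j
    have hmono := Tuple.monotone_sort (sv Rc)
    have hle : (Tuple.sort (sv Rc)).symm j ≤ Fin.rev ⟨0, hm⟩ := by
      rw [Fin.le_def, Fin.val_rev, show ((⟨0, hm⟩ : Fin m) : ℕ) = 0 from rfl]
      have := ((Tuple.sort (sv Rc)).symm j).isLt
      omega
    have := hmono hle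
    simpa [svSorted, Function.comp] using this
  -- σ k ≤ top sv for k ≥ 2T
  have hσle : ∀ k : Fin m, 2*T ≤ (k:ℕ) → σ k ≤ svSorted Rc ⟨0, hm⟩ := by
    intro k hk
    obtain ⟨j, hj⟩ := exists_sv_eq hmn U V hU hV τc hτc0 k
    rw [← hRc'] at hj
    have hτck : τc k = σ k := if_neg (by omega)
    rw [hτck] at hj
    rw [← hj]
    exact hsvle j
  -- key scalar bound
  have hbound : ∀ k : Fin m, 2*T ≤ (k:ℕ) → a * σ k < (a-1)*γ := by
    intro k hk
    rcases eq_or_lt_of_le (hσ0 k) with h0 | h0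
    · rw [← h0, mul_zero]
      exact mul_pos (by linarith) hγpos
    · have hs1 : 0 < svSorted Rc ⟨0, hm⟩ := lt_of_lt_of_le h0 (hσle k hk)
      have hRcne : Rc ≠ 0 := by
        intro hzero
        have hD : Uᵀ * Rc * V = diagRect τc := by
          rw [hRc', ← Matrix.mul_assoc, ← Matrix.mul_assoc, hU, Matrix.one_mul,
            Matrix.mul_assoc, hV, Matrix.mul_one]
        rw [hzero, Matrix.mul_zero, Matrix.zero_mul] at hD
        have := congrFun (congrFun hD.symm k) (Fin.castLE hmn k)
        simp only [diagRect, Matrix.of_apply, Fin.coe_castLE, if_pos rfl, Matrix.zero_apply,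
          hτcdef] at this
        rw [if_neg (show ¬((k:ℕ) < 2*T) from by omega)] at this
        simp only [if_true] at this
        linarith
      have hrank1 : (1:ℝ) ≤ (Rc.rank : ℝ) := by
        have hne : Rc.rank ≠ 0 := fun h => hRcne (rank_zero_eq_zero Rc h)
        exact_mod_cast Nat.one_le_iff_ne_zero.mpr hne
      have h2 := (div_lt_iff₀ (by linarith : (0:ℝ) < a - 1)).mp hγ
      have h4 : σ k ≤ svSorted Rc ⟨0, hm⟩ := hσle k hk
      nlinarith [mul_le_mul_of_nonneg_left h4 ha0.le,
        mul_nonneg (mul_nonneg (mul_nonneg ha0.le ha0.le) (sub_nonneg.mpr hrank1)) hs1.le]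
  -- Pa of Ri rewrite
  have hPa1 : ∀ i : ℕ, Pa a (γ⁻¹ • Ri (i+1))
      = ∑ j : Fin m, gfun a (γ⁻¹ *
          (if K*i+2*T ≤ (j:ℕ) ∧ (j:ℕ) < K*(i+1)+2*T then σ j else 0)) := by
    intro i
    rw [hRi (i+1)]
    simp only [Nat.add_sub_cancel]
    exact hPaf _ (fun j => by split_ifs with h; exacts [hσ0 j, le_refl 0])
  have hfrob2 : ∀ i : ℕ, frobNorm (γ⁻¹ • Ri (i+2))
      = Real.sqrt (∑ j : Fin m, (γ⁻¹ *
          (if K*(i+1)+2*T ≤ (j:ℕ) ∧ (j:ℕ) < K*(i+2)+2*T then σ j else 0)) ^ 2) := by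
    intro i
    rw [show Ri (i+2) = U * diagRect (n := n) (fun j => if K * (i+2 - 1) + 2 * T ≤ (j : ℕ) ∧
      (j : ℕ) < K * (i+2) + 2 * T then σ j else 0) * Vᵀ from hRi (i+2)]
    simp only [show i+2-1 = i+1 from by omega]
    rw [hsmul, hfrobf]
  -- sum of indicators
  have hsum_le : ∀ (c : ℝ), 0 ≤ c → ∀ lo hi : ℕ,
      ∑ j : Fin m, (if lo ≤ (j:ℕ) ∧ (j:ℕ) < hi then c else 0) ≤ ((hi - lo : ℕ) : ℝ) * c := by
    intro c hc lo hi
    rw [Fin.sum_univ_eq_sum_range (fun t => if lo ≤ t ∧ t < hi then c else 0) m,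
      ← Finset.sum_filter]
    calc ∑ t ∈ (Finset.range m).filter (fun t => lo ≤ t ∧ t < hi), c
        ≤ ∑ t ∈ Finset.Ico lo hi, c := by
          apply Finset.sum_le_sum_of_subset_of_nonneg
          · intro t ht
            simp only [Finset.mem_filter, Finset.mem_range] at ht
            exact Finset.mem_Ico.mpr ht.2
          · intro _ _ _; exact hc
      _ = ((hi - lo : ℕ) : ℝ) * c := by
          rw [Finset.sum_const, Nat.card_Ico, nsmul_eq_mul]
  have hsum_eq : ∀ (c : ℝ) (lo hi : ℕ), hi ≤ m →
      ∑ j : Fin m, (if lo ≤ (j:ℕ) ∧ (j:ℕ) < hi then c else 0) = ((hi - lo : ℕ) : ℝ) * c := by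
    intro c lo hi hhi
    rw [Fin.sum_univ_eq_sum_range (fun t => if lo ≤ t ∧ t < hi then c else 0) m,
      ← Finset.sum_filter]
    have hset : (Finset.range m).filter (fun t => lo ≤ t ∧ t < hi) = Finset.Ico lo hi := by
      ext t
      simp only [Finset.mem_filter, Finset.mem_range, Finset.mem_Ico]
      omega
    rw [hset, Finset.sum_const, Nat.card_Ico, nsmul_eq_mul]
  have hPa_nonneg : ∀ X : Matrix (Fin m) (Fin n) ℝ, 0 ≤ Pa a X := by
    intro X
    apply Finset.sum_nonneg
    intro j _
    have hsv : 0 ≤ sv X j := Real.sqrt_nonneg _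
    exact div_nonneg (mul_nonneg ha0.le hsv) (by nlinarith)
  have hsqK : (0:ℝ) < Real.sqrt K := Real.sqrt_pos.mpr (by exact_mod_cast hK)
  -- key termwise inequality
  have key1 : ∀ i : ℕ, frobNorm (γ⁻¹ • Ri (i+2)) ≤ Pa a (γ⁻¹ • Ri (i+1)) / Real.sqrt K := by
    intro i
    rcases le_or_gt m (K*(i+1)+2*T) with hcase | hcase
    · have hz : frobNorm (γ⁻¹ • Ri (i+2)) = 0 := by
        rw [hfrob2 i]
        rw [show ∑ j : Fin m, (γ⁻¹ *
            (if K*(i+1)+2*T ≤ (j:ℕ) ∧ (j:ℕ) < K*(i+2)+2*T then σ j else 0)) ^ 2 = 0 from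
          Finset.sum_eq_zero fun j _ => by
            rw [if_neg (show ¬(K*(i+1)+2*T ≤ (j:ℕ) ∧ (j:ℕ) < K*(i+2)+2*T) from by
              have := j.isLt; omega), mul_zero]; ring]
        exact Real.sqrt_zero
      rw [hz]
      exact div_nonneg (hPa_nonneg _) hsqK.le
    · have hKi1 : 1 ≤ K*(i+1) := Nat.one_le_iff_ne_zero.mpr (by positivity)
      have hkv : K*(i+1)+2*T - 1 < m := by omega
      set kmin : Fin m := ⟨K*(i+1)+2*T - 1, hkv⟩ with hkmindef
      have hkT : 2*T ≤ (kmin : ℕ) := by simp only [hkmindef]; omega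
      set c : ℝ := gfun a (γ⁻¹ * σ kmin) with hcdef
      have hc0 : 0 ≤ c := gfun_nonneg ha0 (mul_nonneg hγinv (hσ0 kmin))
      have hsmin : a * (γ⁻¹ * σ kmin) + 1 ≤ a := by
        have h2 := hbound kmin hkT
        have h3 : a * (γ⁻¹ * σ kmin) ≤ a - 1 := by
          rw [mul_comm γ⁻¹ (σ kmin), ← mul_assoc, ← div_eq_mul_inv, div_le_iff₀ hγpos]
          nlinarith
        linarith
      have hjle : ∀ j : Fin m, K*(i+1)+2*T ≤ (j:ℕ) → γ⁻¹ * σ j ≤ c := by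
        intro j hj
        have h1 : σ j ≤ σ kmin := hσanti (by rw [Fin.le_def]; simp only [hkmindef]; omega)
        have h2 : γ⁻¹ * σ j ≤ γ⁻¹ * σ kmin := mul_le_mul_of_nonneg_left h1 hγinv
        have h3 : γ⁻¹ * σ kmin ≤ c :=
          le_gfun ha0 (mul_nonneg hγinv (hσ0 kmin)) hsmin
        linarith
      have hA : ∑ j : Fin m, (γ⁻¹ *
            (if K*(i+1)+2*T ≤ (j:ℕ) ∧ (j:ℕ) < K*(i+2)+2*T then σ j else 0)) ^ 2
          ≤ (K:ℝ) * c ^ 2 := by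
        calc ∑ j : Fin m, (γ⁻¹ *
              (if K*(i+1)+2*T ≤ (j:ℕ) ∧ (j:ℕ) < K*(i+2)+2*T then σ j else 0)) ^ 2
            ≤ ∑ j : Fin m,
              (if K*(i+1)+2*T ≤ (j:ℕ) ∧ (j:ℕ) < K*(i+2)+2*T then c ^ 2 else 0) := by
              apply Finset.sum_le_sum
              intro j _
              split_ifs with h
              · have := hjle j h.1
                have hnn : 0 ≤ γ⁻¹ * σ j := mul_nonneg hγinv (hσ0 j)
                nlinarith
              · simp
          _ ≤ (((K*(i+2)+2*T) - (K*(i+1)+2*T) : ℕ) : ℝ) * c ^ 2 :=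
              hsum_le (c^2) (by positivity) _ _
          _ = (K:ℝ) * c ^ 2 := by
              congr 2
              have : K*(i+2) = K*(i+1) + K := by ring
              omega
      have hB : (K:ℝ) * c ≤ Pa a (γ⁻¹ • Ri (i+1)) := by
        rw [hPa1 i]
        have hKc : ((K*(i+1)+2*T - (K*i+2*T) : ℕ) : ℝ) * c = (K:ℝ) * c := by
          congr 2
          have : K*(i+1) = K*i + K := by ring
          omega
        rw [← hKc, ← hsum_eq c (K*i+2*T) (K*(i+1)+2*T) hcase.le]
        apply Finset.sum_le_sum
        intro j _
        split_ifs with h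
        · apply gfun_mono ha0 (mul_nonneg hγinv (hσ0 kmin))
          apply mul_le_mul_of_nonneg_left _ hγinv
          apply hσanti
          rw [Fin.le_def]
          simp only [hkmindef]
          omega
        · rw [mul_zero, gfun_zero]
      rw [hfrob2 i]
      calc Real.sqrt (∑ j : Fin m, (γ⁻¹ *
            (if K*(i+1)+2*T ≤ (j:ℕ) ∧ (j:ℕ) < K*(i+2)+2*T then σ j else 0)) ^ 2)
          ≤ Real.sqrt ((K:ℝ) * c ^ 2) := Real.sqrt_le_sqrt hA
        _ = Real.sqrt K * c := by
            rw [Real.sqrt_mul (by positivity), Real.sqrt_sq hc0]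
        _ ≤ Pa a (γ⁻¹ • Ri (i+1)) / Real.sqrt K := by
            rw [le_div_iff₀ hsqK]
            have hKK : Real.sqrt K * c * Real.sqrt K = (K:ℝ) * c := by
              rw [mul_comm (Real.sqrt K * c) (Real.sqrt K), ← mul_assoc,
                Real.mul_self_sqrt (by positivity)]
            rw [hKK]
            exact hB
  -- vanishing of tails
  have hfrz : ∀ i : ℕ, m ≤ i → frobNorm (γ⁻¹ • Ri (i+2)) = 0 := by
    intro i hi
    have hKi : i ≤ K*i := Nat.le_mul_of_pos_left i hK
    rw [hfrob2 i]
    rw [show ∑ j : Fin m, (γ⁻¹ *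
        (if K*(i+1)+2*T ≤ (j:ℕ) ∧ (j:ℕ) < K*(i+2)+2*T then σ j else 0)) ^ 2 = 0 from
      Finset.sum_eq_zero fun j _ => by
        have h1 : K*i ≤ K*(i+1) := Nat.mul_le_mul_left K (by omega)
        rw [if_neg (show ¬(K*(i+1)+2*T ≤ (j:ℕ) ∧ (j:ℕ) < K*(i+2)+2*T) from by
          have := j.isLt; omega), mul_zero]; ring]
    exact Real.sqrt_zero
  have hPaz : ∀ i : ℕ, m ≤ i → Pa a (γ⁻¹ • Ri (i+1)) = 0 := by
    intro i hi
    have hKi : i ≤ K*i := Nat.le_mul_of_pos_left i hK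
    rw [hPa1 i]
    apply Finset.sum_eq_zero
    intro j _
    rw [if_neg (show ¬(K*i+2*T ≤ (j:ℕ) ∧ (j:ℕ) < K*(i+1)+2*T) from by
      have := j.isLt; omega), mul_zero, gfun_zero]
  have hS1 : Summable (fun i : ℕ => frobNorm (γ⁻¹ • Ri (i+2))) := by
    apply summable_of_ne_finset_zero (s := Finset.range m)
    intro i hi
    exact hfrz i (by simpa using hi)
  have hS2 : Summable (fun i : ℕ => Pa a (γ⁻¹ • Ri (i+1)) / Real.sqrt K) := by
    apply summable_of_ne_finset_zero (s := Finset.range m)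
    intro i hi
    rw [hPaz i (by simpa using hi), zero_div]
  constructor
  · exact Summable.tsum_le_tsum key1 hS1 hS2
  · rw [tsum_div_const]
    have hmain : ∑' i : ℕ, Pa a (γ⁻¹ • Ri (i+1)) ≤ Pa a (γ⁻¹ • R₀) := by
      rw [tsum_eq_sum (s := Finset.range m) (fun i hi => hPaz i (by simpa using hi))]
      have hPaRc : Pa a (γ⁻¹ • Rc) = ∑ j, gfun a (γ⁻¹ * τc j) := by
        rw [hRc']; exact hPaf τc hτc0
      have hswap : ∑ i ∈ Finset.range m, Pa a (γ⁻¹ • Ri (i+1)) = Pa a (γ⁻¹ • Rc) := by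
        rw [hPaRc, Finset.sum_congr rfl (fun i _ => hPa1 i), Finset.sum_comm]
        apply Finset.sum_congr rfl
        intro j _
        by_cases hj : 2*T ≤ (j:ℕ)
        · have hτcj : τc j = σ j := if_neg (by omega)
          have hi0lt : ((j:ℕ) - 2*T)/K < m :=
            lt_of_le_of_lt (le_trans (Nat.div_le_self _ _) (by omega)) j.isLt
          have hdm := Nat.div_add_mod ((j:ℕ) - 2*T) K
          have hmod := Nat.mod_lt ((j:ℕ) - 2*T) hK
          set i0 := ((j:ℕ) - 2*T)/K with hi0def
          have hcond : K*i0+2*T ≤ (j:ℕ) ∧ (j:ℕ) < K*(i0+1)+2*T := by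
            have hKi : K*(i0+1) = K*i0 + K := by ring
            omega
          rw [Finset.sum_eq_single_of_mem i0 (Finset.mem_range.mpr hi0lt)]
          · rw [if_pos hcond, hτcj]
          · intro b _ hb
            rw [if_neg, mul_zero, gfun_zero]
            intro hcb
            apply hb
            rcases lt_trichotomy b i0 with h | h | h
            · exfalso
              have hm1 : K*(b+1) ≤ K*i0 := Nat.mul_le_mul_left K h
              have hKb : K*(b+1) = K*b + K := by ring
              omega
            · exact h
            · exfalso
              have hm1 : K*(i0+1) ≤ K*b := Nat.mul_le_mul_left K h
              have hKb : K*(i0+1) = K*i0 + K := by ring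
              omega
        · have hτcj : τc j = 0 := if_pos (by omega)
          rw [hτcj, mul_zero, gfun_zero]
          apply Finset.sum_eq_zero
          intro b _
          rw [if_neg (show ¬(K*b+2*T ≤ (j:ℕ) ∧ (j:ℕ) < K*(b+1)+2*T) from by omega), mul_zero,
            gfun_zero]
      rw [hswap]; exact hPc
    exact (div_le_div_iff_of_pos_right hsqK).mpr hmain
end

section
/- Let a > 0, let 𝒜 : ℝ^{m×n} → ℝ^d (m ≤ n) be a linear map, b ∈ ℝ^d, and suppose there exists X̄ with 𝒜(X̄) = b. Let (λ_k) be a decreasing sequence of positive real numbers with λ_k → 0, and for each k let X_k be a global minimizer of ‖𝒜(X) − b‖₂² + λ_k·P_a(X) over X ∈ ℝ^{m×n}. Then every accumulation point X* of the sequence (X_k) is an optimal solution of the problem (TrAMRM); that is, 𝒜(X*) = b and P_a(X*) ≤ P_a(X) for every X with 𝒜(X) = b. -/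
/-!
Minimizing `‖𝒜 X - b‖² + λₖ P_a(X)` against the feasible `X̄` bounds the residual of `Xₖ` by
`λₖ P_a(X̄) → 0`, and against any feasible `X` gives `P_a(Xₖ) ≤ P_a(X)`. Both bounds pass to a
cluster point because the residual and `P_a` are continuous; continuity of `P_a` follows from
writing it as the trace of `g(X Xᴴ)` in the continuous functional calculus, with
`g μ = a √μ / (a √μ + 1)`, and the continuity of the functional calculus in its argument.
-/

open Matrix Filter

open Topology

theorem MapClusterPt.eq_of_tendsto {α X : Type*} [TopologicalSpace X] [T2Space X] {F : Filter α}
    {u : α → X} {x y : X} (hx : MapClusterPt x F u) (hu : Tendsto u F (𝓝 y)) : x = y :=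
  eq_of_nhds_neBot (hx.neBot.mono (inf_le_inf_left _ hu))

namespace Matrix

variable {m n 𝕜 : Type*} [Fintype m] [DecidableEq m] [Fintype n] [RCLike 𝕜]

theorem IsHermitian.trace_cfc {A : Matrix m m 𝕜} (hA : A.IsHermitian) (f : ℝ → ℝ) :
    (cfc f A).trace = ∑ i, (f (hA.eigenvalues i) : 𝕜) := by
  rw [hA.cfc_eq, IsHermitian.cfc, Unitary.conjStarAlgAut_apply, trace_mul_comm, ← mul_assoc]
  simp [trace_diagonal]

open scoped Matrix.Norms.L2Operator in
theorem continuous_sum_eigenvalues_mul_conjTranspose_self {f : ℝ → ℝ} (hf : Continuous f) :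
    Continuous fun X : Matrix m n 𝕜 =>
      ∑ i, f ((isHermitian_mul_conjTranspose_self X).eigenvalues i) := by
  -- the continuity of `cfc` needs a normed `ℝ`-algebra; the L2 operator norm only provides a `𝕜`-one
  let _ : NormedAlgebra ℝ (Matrix m m 𝕜) :=
    { (inferInstance : Algebra ℝ (Matrix m m 𝕜)) with
      norm_smul_le := fun r x => by
        rw [← algebraMap_smul 𝕜 r x, norm_smul, norm_algebraMap'] }
  have h : Continuous fun X : Matrix m n 𝕜 => (cfc f (X * Xᴴ)).trace :=
    (Continuous.cfc_of_mem_nhdsSet (A := Matrix m m 𝕜) f univ_mem (by fun_prop)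
      (fun X => (isHermitian_mul_conjTranspose_self X).isSelfAdjoint) hf.continuousOn).matrix_trace
  refine (RCLike.continuous_re.comp h).congr fun X => ?_
  simp [(isHermitian_mul_conjTranspose_self X).trace_cfc f]

end Matrix

section Pa

variable {m n : ℕ} {a : ℝ}

theorem Pa_nonneg (ha : 0 ≤ a) (X : Matrix (Fin m) (Fin n) ℝ) : 0 ≤ Pa a X :=
  Finset.sum_nonneg fun i _ =>
    have : 0 ≤ a * sv X i := mul_nonneg ha (Real.sqrt_nonneg _)
    div_nonneg this (by linarith)

theorem continuous_Pa (ha : 0 ≤ a) : Continuous (Pa a : Matrix (Fin m) (Fin n) ℝ → ℝ) := by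
  have hg : Continuous fun μ : ℝ => a * √μ / (a * √μ + 1) :=
    (continuous_const.mul Real.continuous_sqrt).div
      ((continuous_const.mul Real.continuous_sqrt).add continuous_const) fun μ => by
        have : 0 ≤ a * √μ := mul_nonneg ha (Real.sqrt_nonneg μ)
        linarith
  exact continuous_sum_eigenvalues_mul_conjTranspose_self hg

end Pa

theorem statement12_general (m n d : ℕ) (a : ℝ) (ha : 0 < a)
    (A : Matrix (Fin m) (Fin n) ℝ →ₗ[ℝ] EuclideanSpace ℝ (Fin d))
    (b : EuclideanSpace ℝ (Fin d))
    (Xbar : Matrix (Fin m) (Fin n) ℝ) (hXbar : A Xbar = b)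
    (lam : ℕ → ℝ) (hpos : ∀ k, 0 < lam k)
    (hlim : Filter.Tendsto lam Filter.atTop (nhds 0))
    (Xseq : ℕ → Matrix (Fin m) (Fin n) ℝ)
    (hmin : ∀ (k : ℕ) (X : Matrix (Fin m) (Fin n) ℝ),
      ‖A (Xseq k) - b‖ ^ 2 + lam k * Pa a (Xseq k) ≤ ‖A X - b‖ ^ 2 + lam k * Pa a X)
    (Xstar : Matrix (Fin m) (Fin n) ℝ)
    (hacc : MapClusterPt Xstar Filter.atTop Xseq) :
    A Xstar = b ∧
      ∀ X : Matrix (Fin m) (Fin n) ℝ, A X = b → Pa a Xstar ≤ Pa a X := by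
  have hres : Continuous fun X => ‖A X - b‖ ^ 2 :=
    ((A.continuous_of_finiteDimensional.sub continuous_const).norm).pow 2
  refine ⟨?_, fun X hX => ?_⟩
  · have hres_le : ∀ k, ‖A (Xseq k) - b‖ ^ 2 ≤ lam k * Pa a Xbar := fun k => by
      have := hmin k Xbar
      rw [hXbar, sub_self, norm_zero] at this
      nlinarith [mul_nonneg (hpos k).le (Pa_nonneg ha.le (Xseq k))]
    have hres_tendsto : Tendsto (fun k => ‖A (Xseq k) - b‖ ^ 2) atTop (𝓝 0) :=
      squeeze_zero (fun k => sq_nonneg _) hres_le (by simpa using hlim.mul_const (Pa a Xbar))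
    have hzero := (hacc.continuousAt_comp hres.continuousAt).eq_of_tendsto hres_tendsto
    simpa [sub_eq_zero] using hzero
  · have hPa_le : ∀ k, Pa a (Xseq k) ≤ Pa a X := fun k => by
      have := hmin k X
      rw [hX, sub_self, norm_zero] at this
      exact le_of_mul_le_mul_left (by nlinarith [sq_nonneg ‖A (Xseq k) - b‖]) (hpos k)
    exact (isClosed_le (continuous_Pa ha.le) continuous_const).mem_of_mapClusterPt hacc
      (Eventually.of_forall hPa_le)

theorem statement12 (m n d : ℕ) (hmn : m ≤ n) (a : ℝ) (ha : 0 < a)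
    (A : Matrix (Fin m) (Fin n) ℝ →ₗ[ℝ] EuclideanSpace ℝ (Fin d))
    (b : EuclideanSpace ℝ (Fin d))
    (Xbar : Matrix (Fin m) (Fin n) ℝ) (hXbar : A Xbar = b)
    (lam : ℕ → ℝ) (hdec : StrictAnti lam) (hpos : ∀ k, 0 < lam k)
    (hlim : Filter.Tendsto lam Filter.atTop (nhds 0))
    (Xseq : ℕ → Matrix (Fin m) (Fin n) ℝ)
    (hmin : ∀ (k : ℕ) (X : Matrix (Fin m) (Fin n) ℝ),
      ‖A (Xseq k) - b‖ ^ 2 + lam k * Pa a (Xseq k) ≤ ‖A X - b‖ ^ 2 + lam k * Pa a X)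
    (Xstar : Matrix (Fin m) (Fin n) ℝ)
    (hacc : MapClusterPt Xstar Filter.atTop Xseq) :
    A Xstar = b ∧
      ∀ X : Matrix (Fin m) (Fin n) ℝ, A X = b → Pa a Xstar ≤ Pa a X :=
  statement12_general m n d a ha A b Xbar hXbar lam hpos hlim Xseq hmin Xstar hacc
end

section
/- Let Y ∈ ℝ^{m×n} (m ≤ n) have singular value decomposition Y = U·Diag(σ₁(Y), …, σ_m(Y))·Vᵀ and let λ > 0. Then the matrix D_λ(Y) = U·Diag(max(σ₁(Y) − λ/2, 0), …, max(σ_m(Y) − λ/2, 0))·Vᵀ is a global minimizer of the function X ↦ ‖X − Y‖_F² + λ‖X‖_* over X ∈ ℝ^{m×n}. -/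
open Matrix Filter

/-!
Write `D = D_λ(Y)` and `G = Y - D = U·Diag(min(σᵢ, λ/2))·Vᵀ`. Since the singular values of `G`
are at most `λ/2`, duality between the spectral and the nuclear norm gives
`⟨X, G⟩ ≤ (λ/2)‖X‖_*` for every `X`, with equality at `X = D` because `G` and `D` share
singular vectors and `min(σᵢ, λ/2) = λ/2` wherever `max(σᵢ - λ/2, 0) ≠ 0`. Hence
`2G ∈ λ ∂‖D‖_*`, and expanding `‖X - Y‖_F² = ‖X - D‖_F² - 2⟨X - D, G⟩ + ‖G‖_F²` finishes the proof.
-/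

namespace Matrix

variable {ι κ : Type*} [Fintype ι] [Fintype κ] [DecidableEq ι] [DecidableEq κ]

theorem IsHermitian.sum_eigenvalues_comp_of_eq_conj_diagonal {A Q : Matrix ι ι ℝ}
    (hA : A.IsHermitian) (hQ : Qᵀ * Q = 1) {d : ι → ℝ} (h : A = Q * diagonal d * Qᵀ)
    (f : ℝ → ℝ) : ∑ i, f (hA.eigenvalues i) = ∑ i, f (d i) := by
  have hchar : A.charpoly = (diagonal d).charpoly := by
    rw [h, charpoly_mul_comm, ← mul_assoc, hQ, one_mul]
  have hroots := hA.roots_charpoly_eq_eigenvalues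
  rw [hchar, charpoly_diagonal, Polynomial.roots_prod _ _
    (by simp [Finset.prod_ne_zero_iff, Polynomial.X_sub_C_ne_zero])] at hroots
  simp only [Polynomial.roots_X_sub_C, Multiset.bind_singleton] at hroots
  have := congrArg (fun s => (s.map f).sum) hroots
  simp only [Multiset.map_map] at this
  rw [Finset.sum_eq_multiset_sum, Finset.sum_eq_multiset_sum]
  exact this.symm

theorem trace_eq_sum_dotProduct_mulVec {R : Type*} [CommSemiring R] {Q : Matrix ι ι R}
    (hQ : Q * Qᵀ = 1) (M : Matrix ι ι R) :
    trace M = ∑ k, Qᵀ k ⬝ᵥ (M *ᵥ Qᵀ k) := by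
  have : trace M = trace (Qᵀ * M * Q) := by
    rw [mul_assoc, trace_mul_comm, mul_assoc, hQ, mul_one]
  rw [this]
  simp [trace, mul_apply, dotProduct, mulVec, Finset.mul_sum, mul_assoc]

theorem dotProduct_mulVec_self_of_orthogonal {R : Type*} [CommSemiring R] {Q : Matrix ι ι R}
    (hQ : Qᵀ * Q = 1) (v : ι → R) :
    Q *ᵥ v ⬝ᵥ (Q *ᵥ v) = v ⬝ᵥ v := by
  rw [dotProduct_mulVec, ← mulVec_transpose, mulVec_mulVec, hQ, one_mulVec]

theorem dotProduct_orthogonal_conj_mulVec_le {W : Matrix ι κ ℝ} {b : ℝ}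
    (hW : ∀ v y, v ⬝ᵥ (W *ᵥ y) ≤ b * (√(v ⬝ᵥ v) * √(y ⬝ᵥ y)))
    {U : Matrix ι ι ℝ} {V : Matrix κ κ ℝ} (hU : U * Uᵀ = 1) (hV : V * Vᵀ = 1)
    (v : ι → ℝ) (y : κ → ℝ) :
    v ⬝ᵥ ((U * W * Vᵀ) *ᵥ y) ≤ b * (√(v ⬝ᵥ v) * √(y ⬝ᵥ y)) := by
  have hUv := dotProduct_mulVec_self_of_orthogonal (Q := Uᵀ) (by rwa [transpose_transpose]) v
  have hVy := dotProduct_mulVec_self_of_orthogonal (Q := Vᵀ) (by rwa [transpose_transpose]) y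
  rw [← mulVec_mulVec, ← mulVec_mulVec, dotProduct_mulVec, ← mulVec_transpose, ← hUv, ← hVy]
  exact hW _ _

end Matrix

variable {m n : ℕ}

theorem svSorted_nonneg (Y : Matrix (Fin m) (Fin n) ℝ) (i : Fin m) : 0 ≤ svSorted Y i :=
  Real.sqrt_nonneg _

theorem frobNorm_sq (X : Matrix (Fin m) (Fin n) ℝ) : frobNorm X ^ 2 = trace (X * Xᵀ) := by
  rw [frobNorm, Real.sq_sqrt (by positivity)]
  simp [trace, Matrix.mul_apply, sq]

theorem frobNorm_sub_sq (A G : Matrix (Fin m) (Fin n) ℝ) :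
    frobNorm (A - G) ^ 2 = frobNorm A ^ 2 - 2 * trace (A * Gᵀ) + frobNorm G ^ 2 := by
  have hsymm : trace (G * Aᵀ) = trace (A * Gᵀ) := by
    rw [← trace_transpose, transpose_mul, transpose_transpose]
  simp only [frobNorm_sq, transpose_sub, Matrix.sub_mul, Matrix.mul_sub, trace_sub, hsymm]
  ring

theorem frobNorm_sub_sq_le (X D Y : Matrix (Fin m) (Fin n) ℝ) :
    frobNorm (D - Y) ^ 2 ≤ frobNorm (X - Y) ^ 2 + 2 * trace ((X - D) * (Y - D)ᵀ) := by
  have hDY : frobNorm (D - Y) = frobNorm (Y - D) := by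
    simp only [frobNorm, Matrix.sub_apply, sub_sq_comm (D _ _)]
  rw [hDY, show X - Y = (X - D) - (Y - D) by abel, frobNorm_sub_sq (X - D)]
  nlinarith [sq_nonneg (frobNorm (X - D))]

theorem trace_mul_transpose_le_mul_nuclearNorm {X W : Matrix (Fin m) (Fin n) ℝ} {b : ℝ}
    (hW : ∀ v y, v ⬝ᵥ (W *ᵥ y) ≤ b * (√(v ⬝ᵥ v) * √(y ⬝ᵥ y))) :
    trace (X * Wᵀ) ≤ b * nuclearNorm X := by
  -- Expand the trace in an orthonormal eigenbasis `q k` of `X Xᵀ`; then `‖Xᵀ q k‖² = λ_k`.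
  have hA : (X * Xᴴ).IsHermitian := isHermitian_mul_conjTranspose_self X
  obtain ⟨Q, hQ, hcol⟩ : ∃ Q : Matrix (Fin m) (Fin m) ℝ,
      Q * Qᵀ = 1 ∧ ∀ k, Qᵀ k = hA.eigenvectorBasis k :=
    ⟨hA.eigenvectorUnitary,
      by simpa [star_eq_conjTranspose] using mem_unitaryGroup_iff.mp hA.eigenvectorUnitary.2,
      hA.eigenvectorUnitary_transpose_apply⟩
  have hQ' : Qᵀ * Q = 1 := mul_eq_one_comm.mp hQ
  have hunit : ∀ k, Qᵀ k ⬝ᵥ Qᵀ k = 1 := fun k => by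
    simpa [Matrix.mul_apply, dotProduct] using congrFun (congrFun hQ' k) k
  have heig : ∀ k, Xᵀ *ᵥ Qᵀ k ⬝ᵥ (Xᵀ *ᵥ Qᵀ k) = hA.eigenvalues k := fun k => by
    calc Xᵀ *ᵥ Qᵀ k ⬝ᵥ (Xᵀ *ᵥ Qᵀ k) = Qᵀ k ⬝ᵥ ((X * Xᴴ) *ᵥ Qᵀ k) := by
          rw [conjTranspose_eq_transpose_of_trivial, ← mulVec_mulVec, dotProduct_mulVec (Qᵀ k) X,
            mulVec_transpose]
      _ = hA.eigenvalues k := by rw [hA.eigenvalues_eq, hcol]; simp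
  calc trace (X * Wᵀ) = ∑ k, Qᵀ k ⬝ᵥ (W *ᵥ (Xᵀ *ᵥ Qᵀ k)) := by
        rw [trace_eq_sum_dotProduct_mulVec hQ]
        refine Finset.sum_congr rfl fun k _ => ?_
        rw [← mulVec_mulVec, dotProduct_mulVec, dotProduct_mulVec, ← mulVec_transpose,
          ← mulVec_transpose, dotProduct_comm, transpose_transpose]
    _ ≤ ∑ k, b * (√(Qᵀ k ⬝ᵥ Qᵀ k) * √(Xᵀ *ᵥ Qᵀ k ⬝ᵥ (Xᵀ *ᵥ Qᵀ k))) :=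
        Finset.sum_le_sum fun k _ => hW _ _
    _ = b * nuclearNorm X := by
        simp only [hunit, heig, Real.sqrt_one, one_mul, ← Finset.mul_sum]
        rfl

theorem diagRect_sub (a b : Fin m → ℝ) :
    (diagRect a - diagRect b : Matrix (Fin m) (Fin n) ℝ) = diagRect (a - b) := by
  ext i j
  simp only [diagRect, Matrix.sub_apply, of_apply, Pi.sub_apply]
  split_ifs <;> simp

theorem diagRect_mulVec (hmn : m ≤ n) (e : Fin m → ℝ) (y : Fin n → ℝ) :
    diagRect e *ᵥ y = fun i => e i * y (Fin.castLE hmn i) := by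
  ext i
  rw [mulVec, dotProduct, Finset.sum_eq_single (Fin.castLE hmn i)]
  · simp [diagRect]
  · intro j _ hj
    simp only [diagRect, of_apply, ite_mul, zero_mul, ite_eq_right_iff]
    exact fun h => absurd (Fin.ext h) hj
  · simp

theorem diagRect_mul_transpose_diagRect (hmn : m ≤ n) (a b : Fin m → ℝ) :
    (diagRect a : Matrix (Fin m) (Fin n) ℝ) * (diagRect b : Matrix (Fin m) (Fin n) ℝ)ᵀ
      = diagonal (a * b) := by
  refine Matrix.ext fun i j => ?_
  rw [Matrix.mul_apply]
  change (diagRect a *ᵥ fun l => diagRect b j l) i = _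
  rw [diagRect_mulVec hmn]
  by_cases h : i = j
  · subst h; simp [diagRect]
  · simp [diagRect, h, Fin.val_ne_of_ne h]

theorem orthogonal_conj_diagRect_mul_transpose (hmn : m ≤ n) (U : Matrix (Fin m) (Fin m) ℝ)
    {V : Matrix (Fin n) (Fin n) ℝ} (hV : Vᵀ * V = 1) (a b : Fin m → ℝ) :
    U * (diagRect a : Matrix (Fin m) (Fin n) ℝ) * Vᵀ
      * (U * (diagRect b : Matrix (Fin m) (Fin n) ℝ) * Vᵀ)ᵀ
      = U * diagonal (a * b) * Uᵀ := by
  rw [transpose_mul, transpose_mul, transpose_transpose, ← diagRect_mul_transpose_diagRect hmn]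
  simp only [Matrix.mul_assoc]
  rw [← Matrix.mul_assoc Vᵀ V, hV, Matrix.one_mul]

theorem nuclearNorm_orthogonal_conj_diagRect (hmn : m ≤ n) {U : Matrix (Fin m) (Fin m) ℝ}
    {V : Matrix (Fin n) (Fin n) ℝ} (hU : Uᵀ * U = 1) (hV : Vᵀ * V = 1) {τ : Fin m → ℝ}
    (hτ : ∀ i, 0 ≤ τ i) :
    nuclearNorm (U * (diagRect τ : Matrix (Fin m) (Fin n) ℝ) * Vᵀ) = ∑ i, τ i := by
  have hA := isHermitian_mul_conjTranspose_self (U * (diagRect τ : Matrix (Fin m) (Fin n) ℝ) * Vᵀ)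
  have hconj := orthogonal_conj_diagRect_mul_transpose hmn U hV τ τ
  rw [← conjTranspose_eq_transpose_of_trivial] at hconj
  calc nuclearNorm (U * (diagRect τ : Matrix (Fin m) (Fin n) ℝ) * Vᵀ)
        = ∑ i, √(hA.eigenvalues i) := rfl
    _ = ∑ i, √(τ i * τ i) := hA.sum_eigenvalues_comp_of_eq_conj_diagonal hU hconj _
    _ = ∑ i, τ i := Finset.sum_congr rfl fun i _ => Real.sqrt_mul_self (hτ i)

theorem sum_sq_comp_castLE_le (hmn : m ≤ n) (y : Fin n → ℝ) :
    ∑ i : Fin m, y (Fin.castLE hmn i) ^ 2 ≤ ∑ j, y j ^ 2 :=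
  calc ∑ i : Fin m, y (Fin.castLE hmn i) ^ 2
      = ∑ j ∈ Finset.univ.map (Fin.castLEEmb hmn), y j ^ 2 := by rw [Finset.sum_map]; rfl
    _ ≤ ∑ j, y j ^ 2 := Finset.sum_le_univ_sum_of_nonneg fun j => sq_nonneg _

theorem dotProduct_diagRect_mulVec_le (hmn : m ≤ n) {e : Fin m → ℝ} {b : ℝ} (hb : 0 ≤ b)
    (he : ∀ i, |e i| ≤ b) (v : Fin m → ℝ) (y : Fin n → ℝ) :
    v ⬝ᵥ (diagRect e *ᵥ y) ≤ b * (√(v ⬝ᵥ v) * √(y ⬝ᵥ y)) := by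
  rw [diagRect_mulVec hmn]
  calc v ⬝ᵥ (fun i => e i * y (Fin.castLE hmn i))
      ≤ b * ∑ i, |v i| * |y (Fin.castLE hmn i)| := by
        rw [dotProduct, Finset.mul_sum]
        refine Finset.sum_le_sum fun i _ => ?_
        calc v i * (e i * y (Fin.castLE hmn i))
            ≤ |v i * (e i * y (Fin.castLE hmn i))| := le_abs_self _
          _ = |e i| * (|v i| * |y (Fin.castLE hmn i)|) := by rw [abs_mul, abs_mul]; ring
          _ ≤ b * (|v i| * |y (Fin.castLE hmn i)|) := by gcongr; exact he i
    _ ≤ b * (√(∑ i, |v i| ^ 2) * √(∑ i, |y (Fin.castLE hmn i)| ^ 2)) := by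
        gcongr; exact Real.sum_mul_le_sqrt_mul_sqrt _ _ _
    _ ≤ b * (√(v ⬝ᵥ v) * √(y ⬝ᵥ y)) := by
        simp only [sq_abs, dotProduct, ← sq]
        gcongr
        exact sum_sq_comp_castLE_le hmn y

theorem abs_sub_max_sub_le {s c : ℝ} (hs : 0 ≤ s) (hc : 0 ≤ c) : |s - max (s - c) 0| ≤ c :=
  abs_le.mpr ⟨by linarith [max_le (by linarith : s - c ≤ s + c) (by linarith : (0 : ℝ) ≤ s + c)],
    by linarith [le_max_left (s - c) 0]⟩

theorem max_sub_mul_sub_max (s c : ℝ) :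
    max (s - c) 0 * (s - max (s - c) 0) = c * max (s - c) 0 := by
  rcases le_total s c with h | h
  · rw [max_eq_right (by linarith)]; ring
  · rw [max_eq_left (by linarith)]; ring

/-- `D_λ(Y)`, for the singular value decomposition `Y = U·Diag(σ)·Vᵀ`. -/
noncomputable def svThreshold (lam : ℝ) (U : Matrix (Fin m) (Fin m) ℝ) (σ : Fin m → ℝ)
    (V : Matrix (Fin n) (Fin n) ℝ) : Matrix (Fin m) (Fin n) ℝ :=
  U * (diagRect fun i => max (σ i - lam / 2) 0 : Matrix (Fin m) (Fin n) ℝ) * Vᵀ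

theorem isMinOn_svThreshold (hmn : m ≤ n) {lam : ℝ} (hlam : 0 ≤ lam)
    {U : Matrix (Fin m) (Fin m) ℝ} {V : Matrix (Fin n) (Fin n) ℝ} (hU : Uᵀ * U = 1)
    (hV : Vᵀ * V = 1) {σ : Fin m → ℝ} (hσ : ∀ i, 0 ≤ σ i) {Y : Matrix (Fin m) (Fin n) ℝ}
    (hY : Y = U * (diagRect σ : Matrix (Fin m) (Fin n) ℝ) * Vᵀ) :
    IsMinOn (fun X => frobNorm (X - Y) ^ 2 + lam * nuclearNorm X) Set.univ
      (svThreshold lam U σ V) := by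
  intro X _
  set τ : Fin m → ℝ := fun i => max (σ i - lam / 2) 0
  set D := svThreshold lam U σ V
  have hD : D = U * (diagRect τ : Matrix (Fin m) (Fin n) ℝ) * Vᵀ := rfl
  have hG : Y - D = U * (diagRect (σ - τ) : Matrix (Fin m) (Fin n) ℝ) * Vᵀ := by
    rw [hY, hD, ← diagRect_sub, Matrix.mul_sub, Matrix.sub_mul]
  have hDG : trace (D * (Y - D)ᵀ) = lam / 2 * nuclearNorm D := by
    rw [hG, hD, orthogonal_conj_diagRect_mul_transpose hmn U hV, trace_mul_comm,
      ← Matrix.mul_assoc, hU, Matrix.one_mul, trace_diagonal,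
      nuclearNorm_orthogonal_conj_diagRect hmn hU hV fun _ => le_max_right _ _, Finset.mul_sum]
    exact Finset.sum_congr rfl fun i _ => max_sub_mul_sub_max (σ i) (lam / 2)
  have hXG : trace (X * (Y - D)ᵀ) ≤ lam / 2 * nuclearNorm X := by
    refine trace_mul_transpose_le_mul_nuclearNorm fun v y => ?_
    rw [hG]
    exact dotProduct_orthogonal_conj_mulVec_le
      (dotProduct_diagRect_mulVec_le hmn (by positivity) fun i => abs_sub_max_sub_le (hσ i)
        (by positivity))
      (mul_eq_one_comm.mp hU) (mul_eq_one_comm.mp hV) v y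
  have hexpand := frobNorm_sub_sq_le X D Y
  rw [Matrix.sub_mul, trace_sub] at hexpand
  show frobNorm (D - Y) ^ 2 + lam * nuclearNorm D ≤ frobNorm (X - Y) ^ 2 + lam * nuclearNorm X
  linarith

theorem statement16 (m n : ℕ) (hmn : m ≤ n) (lam : ℝ) (hlam : 0 < lam)
    (Y : Matrix (Fin m) (Fin n) ℝ)
    (U : Matrix (Fin m) (Fin m) ℝ) (V : Matrix (Fin n) (Fin n) ℝ)
    (hU : Uᵀ * U = 1) (hV : Vᵀ * V = 1)
    (hSVD : Y = U * diagRect (svSorted Y) * Vᵀ) :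
    ∀ X : Matrix (Fin m) (Fin n) ℝ,
      frobNorm (U * diagRect (fun i => max (svSorted Y i - lam / 2) 0) * Vᵀ - Y) ^ 2
          + lam * nuclearNorm (U * diagRect (fun i => max (svSorted Y i - lam / 2) 0) * Vᵀ)
        ≤ frobNorm (X - Y) ^ 2 + lam * nuclearNorm X := fun X =>
  isMinOn_svThreshold hmn hlam.le hU hV (svSorted_nonneg Y) hSVD (Set.mem_univ X)
end
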